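/- arXiv:2304.12710 — 7 statements merged into one kernel-verified Lean document; each statement's English description precedes it below -/
import Mathlib

section
/- Let G be an r-graph with r ≥ 3 and let S ⊆ V(G) be an even-cardinality set with |∂(S)| = 2. Then the graph G' obtained from G by the 2-cut reduction of S is again an r-graph. -/
open Finset

structure Multigraph (V : Type) where
  mult : Sym2 V → ℕ
  loopless : ∀ v : V, mult s(v, v) = 0

namespace Multigraph

variable {V : Type} [Fintype V] [DecidableEq V]

def degree (G : Multigraph V) (v : V) : ℕ := ∑ u, G.mult s(v, u)

def IsRegular (G : Multigraph V) (r : ℕ) : Prop := ∀ v, G.degree v = r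

def cutsize (G : Multigraph V) (S : Finset V) : ℕ :=
  ∑ x ∈ S, ∑ y ∈ Sᶜ, G.mult s(x, y)

def IsRGraph (G : Multigraph V) (r : ℕ) : Prop :=
  G.IsRegular r ∧ ∀ S : Finset V, Odd S.card → r ≤ G.cutsize S

def reduce (G : Multigraph V) (S : Finset V) {u v : V} (huv : u ≠ v) :
    Multigraph {x : V // x ∉ S} where
  mult p := G.mult (p.map Subtype.val) + (if p.map Subtype.val = s(u, v) then 1 else 0)
  loopless a := by
    simp only [Sym2.map_pair_eq, G.loopless]
    rw [if_neg (fun h => by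
      rcases Sym2.eq_iff.mp h with ⟨rfl, rfl⟩ | ⟨rfl, rfl⟩ <;> exact huv rfl)]

def IsPerfectMatching (G : Multigraph V) (M : Sym2 V → ℕ) : Prop :=
  (∀ p, M p ≤ G.mult p) ∧ ∀ v, ∑ u, M s(v, u) = 1

def degIn (T : Sym2 V → ℕ) (v : V) : ℕ := ∑ u, T s(v, u)

def IsSpanningTree (G : Multigraph V) (T : Sym2 V → ℕ) : Prop :=
  (∀ p, T p ≤ G.mult p) ∧ (∑ p : Sym2 V, T p) + 1 = Fintype.card V ∧
    ∀ u v : V, Relation.ReflTransGen (fun a b => T s(a, b) ≠ 0) u v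

end Multigraph

open Multigraph

section Aux
variable {V : Type} [Fintype V] [DecidableEq V]

lemma aux_sum_ind_pair (A B : Finset V) (a b : V) :
    ∑ x ∈ A, ∑ y ∈ B, (if x = a ∧ y = b then (1:ℕ) else 0)
      = if a ∈ A ∧ b ∈ B then 1 else 0 := by
  have h : ∀ x y : V, (if x = a ∧ y = b then (1:ℕ) else 0)
      = (if x = a then 1 else 0) * (if y = b then 1 else 0) := by
    intro x y; by_cases h1 : x = a <;> by_cases h2 : y = b <;> simp [h1, h2]
  simp_rw [h, ← Finset.mul_sum]
  rw [← Finset.sum_mul, Finset.sum_ite_eq' A a, Finset.sum_ite_eq' B b]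
  by_cases h1 : a ∈ A <;> by_cases h2 : b ∈ B <;> simp [h1, h2]

lemma aux_ind_split {a b : V} (hab : a ≠ b) (x y : V) :
    (if s(x,y) = s(a,b) then (1:ℕ) else 0)
      = (if x = a ∧ y = b then 1 else 0) + (if x = b ∧ y = a then 1 else 0) := by
  by_cases hxa : x = a <;> by_cases hyb : y = b <;> by_cases hxb : x = b <;>
    by_cases hya : y = a <;> simp_all [Sym2.eq_iff]

end Aux

/-- The 2-cut reduction of an even set `S` with `|∂(S)| = 2` (and outside
endpoints `u ≠ v`) of an `r`-graph `G`, `r ≥ 3`, is again an `r`-graph. -/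
theorem two_cut_reduction_is_r_graph {V : Type} [Fintype V] [DecidableEq V]
    (r : ℕ) (G : Multigraph V) (hG : G.IsRGraph r)
    (S : Finset V) (hSeven : Even S.card) (hcut : G.cutsize S = 2)
    (u v : V) (huv : u ≠ v) (hu : u ∉ S) (hv : v ∉ S)
    (hu1 : (∑ y ∈ S, G.mult s(u, y)) = 1) (hv1 : (∑ y ∈ S, G.mult s(v, y)) = 1)
    (hother : ∀ x : V, x ∉ S → x ≠ u → x ≠ v → ∀ y ∈ S, G.mult s(x, y) = 0) (hr : 3 ≤ r) :
    (G.reduce S huv).IsRGraph r := by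
  classical
  obtain ⟨hreg, hodd⟩ := hG
  -- sums over the subtype equal sums over Sᶜ
  have hsub : ∀ f : V → ℕ, ∑ a : {x : V // x ∉ S}, f a.val = ∑ y ∈ Sᶜ, f y := fun f =>
    (Finset.sum_subtype Sᶜ (fun x => Finset.mem_compl) f).symm
  -- edges to S from an outside vertex
  have hS : ∀ x : V, x ∉ S → ∑ y ∈ S, G.mult s(x, y)
      = (if x = u then 1 else 0) + (if x = v then 1 else 0) := by
    intro x hx
    by_cases hxu : x = u
    · subst hxu; rw [hu1]; simp [huv]
    · by_cases hxv : x = v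
      · subst hxv; rw [hv1]; simp [hxu]
      · rw [Finset.sum_eq_zero (fun y hy => hother x hx hxu hxv y hy)]; simp [hxu, hxv]
  constructor
  · -- regularity
    rintro ⟨x, hx⟩
    have hx' : ∑ y ∈ S, G.mult s(x, y) + ∑ y ∈ Sᶜ, G.mult s(x, y) = r := by
      rw [Finset.sum_add_sum_compl]; exact hreg x
    have hind : ∑ y ∈ Sᶜ, (if s(x, y) = s(u, v) then (1:ℕ) else 0)
        = (if x = u then 1 else 0) + (if x = v then 1 else 0) := by
      simp_rw [aux_ind_split huv]
      rw [Finset.sum_add_distrib]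
      congr 1
      · by_cases hxu : x = u
        · simp only [hxu, true_and, if_pos rfl]
          rw [Finset.sum_ite_eq' Sᶜ v (fun _ => 1)]
          simp [hv]
        · simp [hxu]
      · by_cases hxv : x = v
        · simp only [hxv, true_and, if_pos rfl]
          rw [Finset.sum_ite_eq' Sᶜ u (fun _ => 1)]
          simp [hu]
        · simp [hxv]
    show ∑ a : {x : V // x ∉ S}, ((G.reduce S huv).mult s(⟨x, hx⟩, a)) = r
    simp only [Multigraph.reduce, Sym2.map_pair_eq]
    rw [Finset.sum_add_distrib,
      hsub (fun y => G.mult s(x, y)),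
      hsub (fun y => if s(x, y) = s(u, v) then 1 else 0), hind]
    have := hS x hx
    omega
  · -- odd cut condition
    intro T hT
    set T' : Finset V := T.map (Function.Embedding.subtype _) with hT'def
    have hmem : ∀ x : V, x ∈ T' ↔ ∃ h : x ∉ S, (⟨x, h⟩ : {x : V // x ∉ S}) ∈ T := by
      intro x
      simp [hT'def, Finset.mem_map, Function.Embedding.coe_subtype, Subtype.exists]
    have hT'S : Disjoint T' S := by
      rw [Finset.disjoint_left]
      intro x hxT' hxS
      exact ((hmem x).mp hxT').1 hxS
    have hT'card : T'.card = T.card := Finset.card_map _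
    have hB : Tᶜ.map (Function.Embedding.subtype _) = Sᶜ \ T' := by
      ext x
      simp only [Finset.mem_map, Function.Embedding.coe_subtype, Subtype.exists,
        Finset.mem_compl, Finset.mem_sdiff, hmem]
      constructor
      · rintro ⟨a, ha, haT, rfl⟩
        exact ⟨ha, fun ⟨h, hmem2⟩ => haT hmem2⟩
      · rintro ⟨hxS, hxT'⟩
        exact ⟨x, hxS, fun h => hxT' ⟨hxS, h⟩, rfl⟩
    have hsum2 : ∀ f : V → V → ℕ,
        ∑ x ∈ T', ∑ y ∈ Sᶜ \ T', f x y = ∑ x ∈ T, ∑ y ∈ Tᶜ, f x.1 y.1 := by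
      intro f
      rw [← hB, hT'def]
      simp only [Finset.sum_map, Function.Embedding.coe_subtype]
    -- rewrite the reduced cut
    have hred : (G.reduce S huv).cutsize T
        = (∑ x ∈ T', ∑ y ∈ Sᶜ \ T', G.mult s(x, y))
          + ((if u ∈ T' ∧ v ∈ Sᶜ \ T' then 1 else 0)
            + (if v ∈ T' ∧ u ∈ Sᶜ \ T' then 1 else 0)) := by
      show ∑ x ∈ T, ∑ y ∈ Tᶜ, ((G.reduce S huv).mult s(x, y)) = _
      simp only [Multigraph.reduce, Sym2.map_pair_eq]
      rw [← hsum2 (fun a b => G.mult s(a, b) + (if s(a, b) = s(u, v) then 1 else 0))]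
      simp_rw [Finset.sum_add_distrib, aux_ind_split huv, Finset.sum_add_distrib]
      rw [aux_sum_ind_pair, aux_sum_ind_pair]
    have huB : u ∈ Sᶜ \ T' ↔ u ∉ T' := by simp [hu]
    have hvB : v ∈ Sᶜ \ T' ↔ v ∉ T' := by simp [hv]
    -- edges from T' to S
    have hE : ∑ x ∈ T', ∑ y ∈ S, G.mult s(x, y)
        = (if u ∈ T' then 1 else 0) + (if v ∈ T' then 1 else 0) := by
      rw [Finset.sum_congr rfl
        (fun x hx => hS x (Finset.disjoint_left.mp hT'S hx)),
        Finset.sum_add_distrib, Finset.sum_ite_eq' T' u (fun _ => 1),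
        Finset.sum_ite_eq' T' v (fun _ => 1)]
    -- decompose cutsize of T' in G
    have hT'c : T'ᶜ = S ∪ (Sᶜ \ T') := by
      ext x
      by_cases hxS : x ∈ S
      · simp [hxS, Finset.disjoint_right.mp hT'S hxS]
      · simp [hxS]
    have hdisjSB : Disjoint S (Sᶜ \ T') :=
      Disjoint.mono_right Finset.sdiff_subset disjoint_compl_right
    have hcutT' : G.cutsize T' = (∑ x ∈ T', ∑ y ∈ S, G.mult s(x, y))
        + ∑ x ∈ T', ∑ y ∈ Sᶜ \ T', G.mult s(x, y) := by
      unfold Multigraph.cutsize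
      rw [hT'c]
      rw [Finset.sum_congr rfl (fun x _ => Finset.sum_union hdisjSB)]
      rw [Finset.sum_add_distrib]
    have hT'odd : Odd T'.card := hT'card ▸ hT
    have hkey1 : r ≤ G.cutsize T' := hodd T' hT'odd
    rw [hred]
    by_cases hu' : u ∈ T' <;> by_cases hv' : v ∈ T'
    · -- both in T': use the set T' ∪ S
      have hXodd : Odd (T' ∪ S).card := by
        rw [Finset.card_union_of_disjoint hT'S, hT'card]
        exact hT.add_even hSeven
      have hkey2 := hodd (T' ∪ S) hXodd
      have hXc : (T' ∪ S)ᶜ = Sᶜ \ T' := by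
        ext x
        by_cases hxS : x ∈ S
        · simp [hxS]
        · simp [hxS]
      have hzero : ∑ x ∈ S, ∑ y ∈ Sᶜ \ T', G.mult s(x, y) = 0 := by
        refine Finset.sum_eq_zero fun x hx => Finset.sum_eq_zero fun y hy => ?_
        rw [Finset.mem_sdiff, Finset.mem_compl] at hy
        have hyu : y ≠ u := fun h => hy.2 (h ▸ hu')
        have hyv : y ≠ v := fun h => hy.2 (h ▸ hv')
        rw [Sym2.eq_swap]
        exact hother y hy.1 hyu hyv x hx
      have hcutX : G.cutsize (T' ∪ S) = ∑ x ∈ T', ∑ y ∈ Sᶜ \ T', G.mult s(x, y) := by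
        unfold Multigraph.cutsize
        rw [hXc, Finset.sum_union hT'S, hzero, add_zero]
      rw [hcutX] at hkey2
      simp [hu', hv', huB, hvB]
      omega
    · rw [hcutT', hE] at hkey1
      simp [hu', hv', huB, hvB] at hkey1 ⊢
      omega
    · rw [hcutT', hE] at hkey1
      simp [hu', hv', huB, hvB] at hkey1 ⊢
      omega
    · rw [hcutT', hE] at hkey1
      simp [hu', hv', huB, hvB] at hkey1 ⊢
      omega
end

section
/- Let G be an r-graph, S ⊆ V(G) even with |∂(S)| = 2 and outside endpoints u, v, and let G' be obtained from G by the 2-cut reduction of S (adding edge uv). If M is a perfect matching of G, then (M minus the edges of ∂(S) and the edges inside S) together with the edge uv if ∂(S) ⊆ M, is a perfect matching of G'. -/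
open Finset

open Multigraph

/-- If `M` is a perfect matching of the `r`-graph `G` and `G'` is the 2-cut
reduction of the even set `S` (with `|∂(S)| = 2` and outside endpoints `u, v`), then
`M` restricted to the edges outside `S`, together with the new edge `uv` in case
`∂(S) ⊆ M`, is a perfect matching of `G'`. -/
theorem matching_of_reduction {V : Type} [Fintype V] [DecidableEq V]
    (r : ℕ) (G : Multigraph V) (hG : G.IsRGraph r)
    (S : Finset V) (hSeven : Even S.card) (hcut : G.cutsize S = 2)
    (u v : V) (huv : u ≠ v) (hu : u ∉ S) (hv : v ∉ S)
    (hu1 : (∑ y ∈ S, G.mult s(u, y)) = 1) (hv1 : (∑ y ∈ S, G.mult s(v, y)) = 1)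
    (hother : ∀ x : V, x ∉ S → x ≠ u → x ≠ v → ∀ y ∈ S, G.mult s(x, y) = 0)
    (M : Sym2 V → ℕ) (hM : G.IsPerfectMatching M) :
    (G.reduce S huv).IsPerfectMatching (fun p =>
      M (p.map Subtype.val) +
        (if p.map Subtype.val = s(u, v) ∧ (∑ x ∈ S, ∑ y ∈ Sᶜ, M s(x, y)) = 2
          then 1 else 0)) := by
    classical
  obtain ⟨hMle, hMdeg⟩ := hM
  set T := ∑ x ∈ S, ∑ y ∈ Sᶜ, M s(x, y) with hTdef
  have hdiag : ∀ x : V, M s(x, x) = 0 := fun x =>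
    Nat.le_zero.mp (by simpa [G.loopless] using hMle s(x, x))
  have hzero : ∀ x ∉ S, x ≠ u → x ≠ v → ∀ y ∈ S, M s(x, y) = 0 := fun x hx hxu hxv y hy =>
    Nat.le_zero.mp (by rw [← hother x hx hxu hxv y hy]; exact hMle _)
  have hTle : T ≤ 2 := by
    rw [← hcut]
    exact Finset.sum_le_sum fun x _ => Finset.sum_le_sum fun y _ => hMle _
  have hEeven : Even (∑ x ∈ S, ∑ y ∈ S, M s(x, y)) := by
    rw [Nat.even_iff, ← Nat.dvd_iff_mod_eq_zero, ← ZMod.natCast_eq_zero_iff]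
    push_cast
    rw [← Finset.sum_product']
    refine Finset.sum_involution (fun p _ => (p.2, p.1)) ?_ ?_ ?_ ?_
    · intro p _
      have h1 : s(p.2, p.1) = s(p.1, p.2) := Sym2.eq_swap
      rw [h1, ← two_mul]
      exact mul_eq_zero_of_left (by decide) _
    · intro p _ hne heq
      apply hne
      have h2 : p.2 = p.1 := congrArg Prod.fst heq
      rw [← h2, hdiag]
      simp
    · intro p hp
      simp only [Finset.mem_product] at hp ⊢
      exact ⟨hp.2, hp.1⟩
    · intro p _; rfl
  have hTeven : Even T := by
    have hsum : (∑ x ∈ S, ∑ y ∈ S, M s(x, y)) + T = S.card := by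
      rw [hTdef, ← Finset.sum_add_distrib]
      rw [show S.card = ∑ _x ∈ S, 1 from Finset.card_eq_sum_ones S]
      refine Finset.sum_congr rfl fun x _ => ?_
      rw [Finset.sum_add_sum_compl]
      exact hMdeg x
    have h3 := hsum ▸ hSeven
    exact (Nat.even_add.mp h3).mp hEeven
  have hTsplit : T = (∑ y ∈ S, M s(u, y)) + (∑ y ∈ S, M s(v, y)) := by
    rw [hTdef, Finset.sum_comm]
    have hsub : ({u, v} : Finset V) ⊆ Sᶜ := by
      intro x hx
      simp only [Finset.mem_insert, Finset.mem_singleton] at hx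
      rcases hx with rfl | rfl <;> simp [hu, hv]
    rw [← Finset.sum_subset hsub]
    · rw [Finset.sum_pair huv]
      congr 1 <;> exact Finset.sum_congr rfl fun y _ => by rw [Sym2.eq_swap]
    · intro y hy hy2
      simp only [Finset.mem_insert, Finset.mem_singleton, not_or] at hy2
      refine Finset.sum_eq_zero fun x hx => ?_
      rw [Sym2.eq_swap]
      exact hzero y (Finset.mem_compl.mp hy) hy2.1 hy2.2 x hx
  have hule : (∑ y ∈ S, M s(u, y)) ≤ 1 := hu1 ▸ Finset.sum_le_sum fun y _ => hMle _
  have hvle : (∑ y ∈ S, M s(v, y)) ≤ 1 := hv1 ▸ Finset.sum_le_sum fun y _ => hMle _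
  have hT02 : T = 0 ∨ T = 2 := by
    rcases hTeven with ⟨k, hk⟩; omega
  constructor
  · intro p
    simp only [reduce]
    refine add_le_add (hMle _) ?_
    split_ifs with h1 h2
    · exact le_refl 1
    · exact absurd h1.1 h2
    · exact Nat.zero_le 1
    · exact le_refl 0
  · intro x
    obtain ⟨c, hc⟩ := x
    simp only [Sym2.map_pair_eq]
    rw [← Finset.sum_subtype Sᶜ (fun y => Finset.mem_compl)
      (fun w => M s(c, w) + (if s(c, w) = s(u, v) ∧ T = 2 then 1 else 0))]
    rw [Finset.sum_add_distrib]
    have hA : (∑ w ∈ S, M s(c, w)) + (∑ w ∈ Sᶜ, M s(c, w)) = 1 := by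
      rw [Finset.sum_add_sum_compl]; exact hMdeg c
    rcases hT02 with hT | hT
    · -- T = 0 : no matching edge crosses the cut
      have hB : (∑ w ∈ Sᶜ, (if s(c, w) = s(u, v) ∧ T = 2 then 1 else 0)) = 0 :=
        Finset.sum_eq_zero fun w _ => by simp [hT]
      have hinner : (∑ w ∈ S, M s(c, w)) = 0 := by
        by_cases hcu : c = u
        · subst hcu; omega
        · by_cases hcv : c = v
          · subst hcv; omega
          · exact Finset.sum_eq_zero (hzero c hc hcu hcv)
      omega
    · -- T = 2 : both cut edges are in the matching
      have hau : (∑ y ∈ S, M s(u, y)) = 1 := by omega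
      have hav : (∑ y ∈ S, M s(v, y)) = 1 := by omega
      by_cases hcu : c = u
      · have hinner : (∑ w ∈ S, M s(c, w)) = 1 := by rw [hcu]; exact hau
        have hB : (∑ w ∈ Sᶜ, (if s(c, w) = s(u, v) ∧ T = 2 then 1 else 0)) = 1 := by
          have hiff : ∀ w : V, (s(c, w) = s(u, v) ∧ T = 2) ↔ (w = v) := by
            intro w
            rw [hcu]
            constructor
            · rintro ⟨hs, -⟩
              rcases Sym2.eq_iff.mp hs with ⟨-, rfl⟩ | ⟨h1, -⟩
              · rfl
              · exact absurd h1 huv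
            · rintro rfl
              exact ⟨rfl, hT⟩
          simp only [hiff]
          simp [Finset.sum_ite_eq', Finset.mem_compl, hv]
        omega
      · by_cases hcv : c = v
        · have hinner : (∑ w ∈ S, M s(c, w)) = 1 := by rw [hcv]; exact hav
          have hB : (∑ w ∈ Sᶜ, (if s(c, w) = s(u, v) ∧ T = 2 then 1 else 0)) = 1 := by
            have hiff : ∀ w : V, (s(c, w) = s(u, v) ∧ T = 2) ↔ (w = u) := by
              intro w
              rw [hcv]
              constructor
              · rintro ⟨hs, -⟩
                rcases Sym2.eq_iff.mp hs with ⟨h1, -⟩ | ⟨-, rfl⟩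
                · exact absurd h1.symm huv
                · rfl
              · rintro rfl
                exact ⟨Sym2.eq_swap, hT⟩
            simp only [hiff]
            simp [Finset.sum_ite_eq', Finset.mem_compl, hu]
          omega
        · have hB : (∑ w ∈ Sᶜ, (if s(c, w) = s(u, v) ∧ T = 2 then 1 else 0)) = 0 := by
            refine Finset.sum_eq_zero fun w _ => ?_
            rw [if_neg]
            rintro ⟨hs, -⟩
            rcases Sym2.eq_iff.mp hs with ⟨rfl, rfl⟩ | ⟨rfl, rfl⟩
            · exact hcu rfl
            · exact hcv rfl
          have hinner : (∑ w ∈ S, M s(c, w)) = 0 :=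
            Finset.sum_eq_zero (hzero c hc hcu hcv)
          omega
end

section
/- Let k ≥ 2. If G' is obtained from a graph G by a 2-cut reduction of an even set S with |∂(S)| = 2, and G admits a nowhere-zero k-flow, then G' admits a nowhere-zero k-flow. -/
open Finset

/-- A finite loopless multigraph with vertex type `V` and edge type `E`. -/
structure EMultigraph (V E : Type) where
  ends : E → Sym2 V
  loopless : ∀ e : E, ¬ (ends e).IsDiag

namespace EMultigraph

variable {V E : Type}

/-- `G` admits a nowhere-zero `k`-flow: an orientation (given by tail/head maps
compatible with the edge-ends) together with `f : E → ℤ`, `1 ≤ |f e| ≤ k - 1`,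
satisfying Kirchhoff's conservation law at every vertex. -/
def HasNZFlow [Fintype E] [DecidableEq V] (G : EMultigraph V E) (k : ℕ) : Prop :=
  ∃ (tl hd : E → V) (f : E → ℤ),
    (∀ e, G.ends e = s(tl e, hd e)) ∧
    (∀ e, 1 ≤ |f e| ∧ |f e| ≤ (k : ℤ) - 1) ∧
    ∀ v : V, (∑ e ∈ univ.filter fun e => hd e = v, f e) =
      ∑ e ∈ univ.filter fun e => tl e = v, f e

/-- Number of edges of `G` with exactly one end in `S`. -/
def cutsize [Fintype E] [DecidableEq V] [Fintype V] (G : EMultigraph V E)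
    (S : Finset V) : ℕ :=
  (univ.filter fun e : E => ∃ x ∈ G.ends e, x ∈ S ∧ ∃ y ∈ G.ends e, y ∉ S).card

/-- The 2-cut reduction of `G` at `S`: delete the vertices of `S` and the two
edges of `∂(S)`, and add one new edge joining the outside endpoints `u` and `v`. -/
def reduce [DecidableEq V] [Fintype V] (G : EMultigraph V E) (S : Finset V)
    (u v : V) (hu : u ∉ S) (hv : v ∉ S) (huv : u ≠ v) :
    EMultigraph {x : V // x ∉ S} ({e : E // ∀ x ∈ G.ends e, x ∉ S} ⊕ Unit) where
  ends e :=
    match e with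
    | Sum.inl e => (G.ends e.1).attachWith e.2
    | Sum.inr _ => s(⟨u, hu⟩, ⟨v, hv⟩)
  loopless e := by
    match e with
    | Sum.inl e =>
      intro hd
      exact G.loopless e.1
        (by simpa [Sym2.attachWith_map_subtypeVal] using hd.map (f := Subtype.val))
    | Sum.inr _ =>
      simp only [Sym2.mk_isDiag_iff]
      intro h
      exact huv (congrArg Subtype.val h)

end EMultigraph

open EMultigraph

/-- If a graph `G` admits a nowhere-zero `k`-flow (`k ≥ 2`) and `G'` is obtained
from `G` by the 2-cut reduction of an even set `S` with `|∂(S)| = 2` and outside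
endpoints `u ≠ v`, then `G'` admits a nowhere-zero `k`-flow. -/
theorem nzflow_of_two_cut_reduction {V E : Type} [Fintype V] [Fintype E]
    [DecidableEq V] (k : ℕ) (hk : 2 ≤ k) (G : EMultigraph V E)
    (S : Finset V) (hSeven : Even S.card) (hcut : G.cutsize S = 2)
    (u v : V) (hu : u ∉ S) (hv : v ∉ S) (huv : u ≠ v)
    (e₁ e₂ : E) (hee : e₁ ≠ e₂) (a b : V) (ha : a ∈ S) (hb : b ∈ S)
    (h₁ : G.ends e₁ = s(u, a)) (h₂ : G.ends e₂ = s(v, b))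
    (hflow : G.HasNZFlow k) :
    (G.reduce S u v hu hv huv).HasNZFlow k := by
  classical
  obtain ⟨tl, hd, f, hends, hbd, hcons⟩ := hflow
  set P : E → Prop := fun e => ∀ x ∈ G.ends e, x ∉ S with hP
  -- basic facts
  have hmem : ∀ e x, x ∈ G.ends e ↔ x = tl e ∨ x = hd e := by
    intro e x; rw [hends e]; simp [Sym2.mem_iff]
  have hne : ∀ e, tl e ≠ hd e := by
    intro e h
    exact G.loopless e (by rw [hends e, Sym2.mk_isDiag_iff]; exact h)
  have hau : a ≠ u := fun h => hu (h ▸ ha)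
  have hbu : b ≠ u := fun h => hu (h ▸ hb)
  have hav : a ≠ v := fun h => hv (h ▸ ha)
  have hbv : b ≠ v := fun h => hv (h ▸ hb)
  -- orientation of e₁, e₂
  have h₁' : (tl e₁ = u ∧ hd e₁ = a) ∨ (tl e₁ = a ∧ hd e₁ = u) := by
    have := (hends e₁).symm.trans h₁
    rw [Sym2.eq_iff] at this
    tauto
  have h₂' : (tl e₂ = v ∧ hd e₂ = b) ∨ (tl e₂ = b ∧ hd e₂ = v) := by
    have := (hends e₂).symm.trans h₂
    rw [Sym2.eq_iff] at this
    tauto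
  -- the cut set is exactly {e₁, e₂}
  have hcutset : (univ.filter fun e : E =>
      ∃ x ∈ G.ends e, x ∈ S ∧ ∃ y ∈ G.ends e, y ∉ S) = {e₁, e₂} := by
    symm
    apply Finset.eq_of_subset_of_card_le
    · intro e he
      simp only [Finset.mem_insert, Finset.mem_singleton] at he
      rcases he with rfl | rfl
      · simp only [Finset.mem_filter, Finset.mem_univ, true_and]
        exact ⟨a, by rw [h₁]; simp, ha, u, by rw [h₁]; simp, hu⟩
      · simp only [Finset.mem_filter, Finset.mem_univ, true_and]
        exact ⟨b, by rw [h₂]; simp, hb, v, by rw [h₂]; simp, hv⟩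
    · have hcut' : (univ.filter fun e : E =>
          ∃ x ∈ G.ends e, x ∈ S ∧ ∃ y ∈ G.ends e, y ∉ S).card = 2 := by
        rw [← hcut, EMultigraph.cutsize]
      rw [hcut']
      simp [hee]
  have hcross : ∀ e : E, e ≠ e₁ → e ≠ e₂ → (tl e ∈ S ↔ hd e ∈ S) := by
    intro e he1 he2
    by_contra h
    have : e ∈ ({e₁, e₂} : Finset E) := by
      rw [← hcutset, Finset.mem_filter]
      refine ⟨Finset.mem_univ _, ?_⟩
      rcases Decidable.em (tl e ∈ S) with htl | htl
      · exact ⟨tl e, (hmem e _).2 (Or.inl rfl), htl, hd e, (hmem e _).2 (Or.inr rfl),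
          fun hh => h ⟨fun _ => hh, fun _ => htl⟩⟩
      · have hhd : hd e ∈ S := by tauto
        exact ⟨hd e, (hmem e _).2 (Or.inr rfl), hhd, tl e, (hmem e _).2 (Or.inl rfl), htl⟩
    simp [he1, he2] at this
  have hnP1 : ¬ P e₁ := by
    intro h; exact h a (by rw [h₁]; simp) ha
  have hnP2 : ¬ P e₂ := by
    intro h; exact h b (by rw [h₂]; simp) hb
  -- the new flow value
  set g : ℤ := if tl e₁ = u then f e₁ else -f e₁ with hg
  -- the cut identity
  have hgcut : g = if hd e₂ = v then f e₂ else -f e₂ := by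
    have key : ∑ e : E, ((if hd e ∈ S then f e else 0) - (if tl e ∈ S then f e else 0)) = 0 := by
      have hF : ∀ F : E → V, (∑ e : E, if F e ∈ S then f e else 0)
          = ∑ w ∈ S, ∑ e ∈ univ.filter (fun e => F e = w), f e := by
        intro F
        simp_rw [Finset.sum_filter]
        rw [Finset.sum_comm]
        apply Finset.sum_congr rfl
        intro e _
        rw [Finset.sum_ite_eq]
      rw [Finset.sum_sub_distrib, hF hd, hF tl, ← Finset.sum_sub_distrib]
      apply Finset.sum_eq_zero
      intro w _
      rw [hcons w, sub_self]
    have split : ∑ e : E, ((if hd e ∈ S then f e else 0) - (if tl e ∈ S then f e else 0))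
        = ∑ e ∈ ({e₁, e₂} : Finset E),
            ((if hd e ∈ S then f e else 0) - (if tl e ∈ S then f e else 0)) := by
      symm
      apply Finset.sum_subset (Finset.subset_univ _)
      intro e _ he
      simp only [Finset.mem_insert, Finset.mem_singleton, not_or] at he
      have hiff := hcross e he.1 he.2
      by_cases htl : tl e ∈ S
      · simp [htl, hiff.1 htl]
      · have hhd : hd e ∉ S := fun h => htl (hiff.2 h)
        simp [htl, hhd]
    rw [split, Finset.sum_pair hee] at key
    rcases h₁' with ⟨ht1, hh1⟩ | ⟨ht1, hh1⟩ <;> rcases h₂' with ⟨ht2, hh2⟩ | ⟨ht2, hh2⟩ <;>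
      simp only [hg, ht1, hh1, ht2, hh2] at key ⊢ <;>
      simp [ha, hb, hu, hv, hau, hbv, hau.symm, hbv.symm] at key ⊢ <;>
      linarith
  -- useful values of g
  have hgv1 : tl e₁ = u → g = f e₁ := fun h => by rw [hg, if_pos h]
  have hgv1' : hd e₁ = u → g = -f e₁ := fun h => by
    have hne1 : tl e₁ ≠ u := fun h' => hne e₁ (h'.trans h.symm)
    rw [hg, if_neg hne1]
  have hgv2 : hd e₂ = v → g = f e₂ := fun h => by rw [hgcut, if_pos h]
  have hgv2' : tl e₂ = v → g = -f e₂ := fun h => by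
    have hne2 : hd e₂ ≠ v := fun h' => hne e₂ (h.trans h'.symm)
    rw [hgcut, if_neg hne2]
  -- build the flow on the reduced graph
  refine ⟨Sum.elim (fun e => ⟨tl e.1, e.2 _ ((hmem e.1 _).2 (Or.inl rfl))⟩) (fun _ => ⟨u, hu⟩),
    Sum.elim (fun e => ⟨hd e.1, e.2 _ ((hmem e.1 _).2 (Or.inr rfl))⟩) (fun _ => ⟨v, hv⟩),
    Sum.elim (fun e => f e.1) (fun _ => g), ?_, ?_, ?_⟩
  · rintro (e | e)
    · show (G.ends e.1).attachWith e.2 = _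
      apply Sym2.map.injective Subtype.val_injective
      simp [Sym2.attachWith_map_subtypeVal, hends e.1]
    · rfl
  · rintro (e | e)
    · exact hbd e.1
    · show 1 ≤ |g| ∧ |g| ≤ (k : ℤ) - 1
      have habs : |g| = |f e₁| := by
        rw [hg]; split_ifs
        · rfl
        · exact abs_neg _
      rw [habs]
      exact hbd e₁
  · rintro ⟨w, hw⟩
    have haw : a ≠ w := fun h => hw (h ▸ ha)
    have hbw : b ≠ w := fun h => hw (h ▸ hb)
    -- sum over subtype equals filtered sum
    have hsub : ∀ q : E → ℤ, (∑ e : {e : E // P e}, q e.1) = ∑ e : E, if P e then q e else 0 := by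
      intro q
      rw [← Finset.sum_filter]
      exact (Finset.sum_subtype (univ.filter P) (by intro x; simp) q).symm
    have hsumhd : (∑ e ∈ univ.filter fun e : ({e : E // P e} ⊕ Unit) =>
          Sum.elim (fun e => (⟨hd e.1, e.2 _ ((hmem e.1 _).2 (Or.inr rfl))⟩ : {x : V // x ∉ S}))
            (fun _ => ⟨v, hv⟩) e = ⟨w, hw⟩,
          Sum.elim (fun e => f e.1) (fun _ => g) e)
        = (∑ e : E, if P e ∧ hd e = w then f e else 0) + (if v = w then g else 0) := by
      rw [Finset.sum_filter, Fintype.sum_sum_type]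
      congr 1
      · simp only [Sum.elim_inl, Subtype.mk.injEq]
        rw [hsub (fun e => if hd e = w then f e else 0)]
        simp only [← ite_and]
      · simp [Subtype.ext_iff]
    have hsumtl : (∑ e ∈ univ.filter fun e : ({e : E // P e} ⊕ Unit) =>
          Sum.elim (fun e => (⟨tl e.1, e.2 _ ((hmem e.1 _).2 (Or.inl rfl))⟩ : {x : V // x ∉ S}))
            (fun _ => ⟨u, hu⟩) e = ⟨w, hw⟩,
          Sum.elim (fun e => f e.1) (fun _ => g) e)
        = (∑ e : E, if P e ∧ tl e = w then f e else 0) + (if u = w then g else 0) := by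
      rw [Finset.sum_filter, Fintype.sum_sum_type]
      congr 1
      · simp only [Sum.elim_inl, Subtype.mk.injEq]
        rw [hsub (fun e => if tl e = w then f e else 0)]
        simp only [← ite_and]
      · simp [Subtype.ext_iff]
    -- decomposition of old sums
    have hold : ∀ F : E → V, (∀ e, F e = tl e ∨ F e = hd e) →
        (∑ e : E, if F e = w then f e else 0) =
        (∑ e : E, if P e ∧ F e = w then f e else 0)
          + ((if F e₁ = w then f e₁ else 0) + (if F e₂ = w then f e₂ else 0)) := by
      intro F hFm
      have h1 : ∀ e ∈ (univ : Finset E), (if F e = w then f e else 0)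
          = (if P e ∧ F e = w then f e else 0) + (if ¬ P e ∧ F e = w then f e else 0) := by
        intro e _
        by_cases hp : P e <;> by_cases hf : F e = w
        · rw [if_pos hf, if_pos ⟨hp, hf⟩, if_neg (fun h => h.1 hp)]; ring
        · rw [if_neg hf, if_neg (fun h => hf h.2), if_neg (fun h => hf h.2)]; ring
        · rw [if_pos hf, if_neg (fun h => hp h.1), if_pos ⟨hp, hf⟩]; ring
        · rw [if_neg hf, if_neg (fun h => hf h.2), if_neg (fun h => hf h.2)]; ring
      rw [Finset.sum_congr rfl h1, Finset.sum_add_distrib]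
      congr 1
      have hzero : ∀ e ∈ (univ : Finset E), e ∉ ({e₁, e₂} : Finset E) →
          (if ¬ P e ∧ F e = w then f e else 0) = 0 := by
        intro e _ hme
        simp only [Finset.mem_insert, Finset.mem_singleton, not_or] at hme
        rw [if_neg]
        rintro ⟨hnp, hfw⟩
        have hcr := hcross e hme.1 hme.2
        simp only [hP] at hnp
        push_neg at hnp
        obtain ⟨x, hxe, hxS⟩ := hnp
        have hboth : tl e ∈ S ∧ hd e ∈ S := by
          rcases (hmem e x).1 hxe with rfl | rfl
          · exact ⟨hxS, hcr.1 hxS⟩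
          · exact ⟨hcr.2 hxS, hxS⟩
        rcases hFm e with hF | hF
        · exact hw (by rw [← hfw, hF]; exact hboth.1)
        · exact hw (by rw [← hfw, hF]; exact hboth.2)
      rw [← Finset.sum_subset (Finset.subset_univ {e₁, e₂}) hzero, Finset.sum_pair hee]
      simp [hnP1, hnP2]
    -- conservation in G at w, in indicator form
    have hcw : (∑ e : E, if hd e = w then f e else 0) = ∑ e : E, if tl e = w then f e else 0 := by
      have h := hcons w
      rwa [Finset.sum_filter, Finset.sum_filter] at h
    rw [hold hd (fun e => Or.inr rfl), hold tl (fun e => Or.inl rfl)] at hcw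
    -- per-edge cut contributions
    have c₁ : (if tl e₁ = w then f e₁ else 0) - (if hd e₁ = w then f e₁ else 0)
        = (if u = w then g else 0) := by
      rcases h₁' with ⟨ht1, hh1⟩ | ⟨ht1, hh1⟩
      · rw [ht1, hh1, if_neg haw]
        by_cases hwu : u = w
        · rw [if_pos hwu, if_pos hwu, hgv1 ht1]; ring
        · rw [if_neg hwu, if_neg hwu]; ring
      · rw [ht1, hh1, if_neg haw]
        by_cases hwu : u = w
        · rw [if_pos hwu, if_pos hwu, hgv1' hh1]; ring
        · rw [if_neg hwu, if_neg hwu]; ring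
    have c₂ : (if tl e₂ = w then f e₂ else 0) - (if hd e₂ = w then f e₂ else 0)
        = (if v = w then -g else 0) := by
      rcases h₂' with ⟨ht2, hh2⟩ | ⟨ht2, hh2⟩
      · rw [ht2, hh2, if_neg hbw]
        by_cases hwv : v = w
        · rw [if_pos hwv, if_pos hwv, hgv2' ht2]; ring
        · rw [if_neg hwv, if_neg hwv]; ring
      · rw [ht2, hh2, if_neg hbw]
        by_cases hwv : v = w
        · rw [if_pos hwv, if_pos hwv, hgv2 hh2]; ring
        · rw [if_neg hwv, if_neg hwv]; ring
    rw [hsumhd, hsumtl]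
    by_cases hwv : v = w <;> by_cases hwu : u = w
    · exact absurd (hwu.trans hwv.symm) huv
    all_goals simp only [hwv, hwu, if_pos, if_neg, if_true, if_false] at *
    all_goals simp [hwv, hwu] at c₁ c₂ ⊢
    all_goals linarith
end

section
/- Let G be an r-regular multigraph and S ⊆ V(G) a set of odd cardinality with |∂(S)| = r. Let G_S and G_{S̄} be obtained from G by contracting S (resp. its complement S̄) to a single vertex and deleting resulting loops. Then G is an r-graph if and only if both G_S and G_{S̄} are r-graphs. -/
open Finset

open Multigraph

variable {V : Type} [Fintype V] [DecidableEq V]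

/-- The multigraph obtained from `G` by contracting the vertex set `S` to a single
vertex (the vertex `none`) and deleting the resulting loops. -/
def Multigraph.contract (G : Multigraph V) (S : Finset V) :
    Multigraph (Option {x : V // x ∉ S}) where
  mult := Sym2.lift ⟨fun a b =>
    match a, b with
    | some a, some b => G.mult s(a.1, b.1)
    | some a, none => ∑ y ∈ S, G.mult s(a.1, y)
    | none, some b => ∑ y ∈ S, G.mult s(b.1, y)
    | none, none => 0,
    by
      intro a b
      rcases a with _ | a <;> rcases b with _ | b <;> simp only []
      rw [Sym2.eq_swap]⟩
  loopless w := by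
    rcases w with _ | a <;> simp [G.loopless]


def ecut (G : Multigraph V) (A B : Finset V) : ℕ := ∑ x ∈ A, ∑ y ∈ B, G.mult s(x, y)

lemma ecut_comm (G : Multigraph V) (A B : Finset V) : ecut G A B = ecut G B A := by
  rw [ecut, ecut, Finset.sum_comm]
  exact Finset.sum_congr rfl fun x _ => Finset.sum_congr rfl fun y _ => by rw [Sym2.eq_swap]

lemma cutsize_eq_ecut (G : Multigraph V) (S : Finset V) : G.cutsize S = ecut G S Sᶜ := rfl

lemma ecut_union_left (G : Multigraph V) {A B : Finset V} (C : Finset V) (h : Disjoint A B) :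
    ecut G (A ∪ B) C = ecut G A C + ecut G B C := Finset.sum_union h

lemma ecut_union_right (G : Multigraph V) (A : Finset V) {B C : Finset V} (h : Disjoint B C) :
    ecut G A (B ∪ C) = ecut G A B + ecut G A C := by
  simp [ecut, Finset.sum_union h, Finset.sum_add_distrib]

lemma cutsize_compl (G : Multigraph V) (S : Finset V) : G.cutsize Sᶜ = G.cutsize S := by
  rw [cutsize_eq_ecut, cutsize_eq_ecut, compl_compl, ecut_comm]


set_option linter.unusedSectionVars false

lemma ecut_congr (G : Multigraph V) {A A' B B' : Finset V} (h1 : A = A') (h2 : B = B') :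
    ecut G A B = ecut G A' B' := by rw [h1, h2]

lemma cut_submod (G : Multigraph V) (X S : Finset V) :
    G.cutsize (X ∩ S) + G.cutsize (X ∪ S) ≤ G.cutsize X + G.cutsize S ∧
    G.cutsize (X \ S) + G.cutsize (S \ X) ≤ G.cutsize X + G.cutsize S := by
  have mem4 : ∀ a : V, (a ∈ X ∩ S ∨ a ∈ X ∩ Sᶜ ∨ a ∈ Xᶜ ∩ S ∨ a ∈ Xᶜ ∩ Sᶜ) := by
    intro a; simp [Finset.mem_inter, Finset.mem_compl]; tauto
  have d12 : Disjoint (X ∩ S) (X ∩ Sᶜ) := by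
    rw [Finset.disjoint_left]; intro a h1 h2
    simp [Finset.mem_inter, Finset.mem_compl] at h1 h2; tauto
  have d13 : Disjoint (X ∩ S) (Xᶜ ∩ S) := by
    rw [Finset.disjoint_left]; intro a h1 h2
    simp [Finset.mem_inter, Finset.mem_compl] at h1 h2; tauto
  have d23 : Disjoint (X ∩ Sᶜ) (Xᶜ ∩ S) := by
    rw [Finset.disjoint_left]; intro a h1 h2
    simp [Finset.mem_inter, Finset.mem_compl] at h1 h2; tauto
  have d34 : Disjoint (Xᶜ ∩ S) (Xᶜ ∩ Sᶜ) := by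
    rw [Finset.disjoint_left]; intro a h1 h2
    simp [Finset.mem_inter, Finset.mem_compl] at h1 h2; tauto
  have d24 : Disjoint (X ∩ Sᶜ) (Xᶜ ∩ Sᶜ) := by
    rw [Finset.disjoint_left]; intro a h1 h2
    simp [Finset.mem_inter, Finset.mem_compl] at h1 h2; tauto
  have d14 : Disjoint (X ∩ S) (Xᶜ ∩ Sᶜ) := by
    rw [Finset.disjoint_left]; intro a h1 h2
    simp [Finset.mem_inter, Finset.mem_compl] at h1 h2; tauto
  have e1 : G.cutsize X
      = ecut G (X ∩ S) (Xᶜ ∩ S) + ecut G (X ∩ S) (Xᶜ ∩ Sᶜ)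
        + (ecut G (X ∩ Sᶜ) (Xᶜ ∩ S) + ecut G (X ∩ Sᶜ) (Xᶜ ∩ Sᶜ)) := by
    have hXc : Xᶜ = (Xᶜ ∩ S) ∪ (Xᶜ ∩ Sᶜ) := by
      ext a; simp [Finset.mem_inter, Finset.mem_compl]; tauto
    have hX : X = (X ∩ S) ∪ (X ∩ Sᶜ) := by
      ext a; simp [Finset.mem_inter, Finset.mem_compl]; tauto
    rw [cutsize_eq_ecut, ecut_congr G hX hXc]
    rw [ecut_union_left _ _ d12, ecut_union_right _ _ d34, ecut_union_right _ _ d34]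
  have e2 : G.cutsize S
      = ecut G (X ∩ S) (X ∩ Sᶜ) + ecut G (X ∩ S) (Xᶜ ∩ Sᶜ)
        + (ecut G (Xᶜ ∩ S) (X ∩ Sᶜ) + ecut G (Xᶜ ∩ S) (Xᶜ ∩ Sᶜ)) := by
    have hSc : Sᶜ = (X ∩ Sᶜ) ∪ (Xᶜ ∩ Sᶜ) := by
      ext a; simp [Finset.mem_inter, Finset.mem_compl]; tauto
    have hS : S = (X ∩ S) ∪ (Xᶜ ∩ S) := by
      ext a; simp [Finset.mem_inter, Finset.mem_compl]; tauto
    rw [cutsize_eq_ecut, ecut_congr G hS hSc]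
    rw [ecut_union_left _ _ d13, ecut_union_right _ _ d24, ecut_union_right _ _ d24]
  have e3 : G.cutsize (X ∩ S)
      = ecut G (X ∩ S) (X ∩ Sᶜ) + (ecut G (X ∩ S) (Xᶜ ∩ S) + ecut G (X ∩ S) (Xᶜ ∩ Sᶜ)) := by
    have hc : (X ∩ S)ᶜ = (X ∩ Sᶜ) ∪ ((Xᶜ ∩ S) ∪ (Xᶜ ∩ Sᶜ)) := by
      ext a; simp [Finset.mem_inter, Finset.mem_compl]; tauto
    rw [cutsize_eq_ecut, ecut_congr G rfl hc]
    rw [ecut_union_right _ _ (Finset.disjoint_union_right.mpr ⟨d23, d24⟩),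
      ecut_union_right _ _ d34]
  have e4 : G.cutsize (X ∪ S)
      = ecut G (X ∩ S) (Xᶜ ∩ Sᶜ) + ecut G (X ∩ Sᶜ) (Xᶜ ∩ Sᶜ) + ecut G (Xᶜ ∩ S) (Xᶜ ∩ Sᶜ) := by
    have hc : (X ∪ S)ᶜ = Xᶜ ∩ Sᶜ := by
      ext a; simp [Finset.mem_inter, Finset.mem_compl]
    have hu : X ∪ S = ((X ∩ S) ∪ (X ∩ Sᶜ)) ∪ (Xᶜ ∩ S) := by
      ext a; simp [Finset.mem_inter, Finset.mem_compl]; tauto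
    rw [cutsize_eq_ecut, ecut_congr G hu hc]
    rw [ecut_union_left _ _ (Finset.disjoint_union_left.mpr ⟨d13, d23⟩),
      ecut_union_left _ _ d12]
  have e5 : G.cutsize (X \ S)
      = ecut G (X ∩ S) (X ∩ Sᶜ) + (ecut G (X ∩ Sᶜ) (Xᶜ ∩ S) + ecut G (X ∩ Sᶜ) (Xᶜ ∩ Sᶜ)) := by
    have hd : X \ S = X ∩ Sᶜ := by
      ext a; simp [Finset.mem_inter, Finset.mem_compl]
    have hc : (X ∩ Sᶜ)ᶜ = (X ∩ S) ∪ ((Xᶜ ∩ S) ∪ (Xᶜ ∩ Sᶜ)) := by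
      ext a; simp [Finset.mem_inter, Finset.mem_compl]; tauto
    rw [cutsize_eq_ecut, hd, ecut_congr G rfl hc]
    rw [ecut_union_right _ _ (Finset.disjoint_union_right.mpr ⟨d13, d14⟩),
      ecut_union_right _ _ d34, ecut_comm G (X ∩ Sᶜ) (X ∩ S)]
  have e6 : G.cutsize (S \ X)
      = ecut G (X ∩ S) (Xᶜ ∩ S) + (ecut G (X ∩ Sᶜ) (Xᶜ ∩ S) + ecut G (Xᶜ ∩ S) (Xᶜ ∩ Sᶜ)) := by
    have hd : S \ X = Xᶜ ∩ S := by
      ext a; simp [Finset.mem_inter, Finset.mem_compl]; tauto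
    have hc : (Xᶜ ∩ S)ᶜ = (X ∩ S) ∪ ((X ∩ Sᶜ) ∪ (Xᶜ ∩ Sᶜ)) := by
      ext a; simp [Finset.mem_inter, Finset.mem_compl]; tauto
    rw [cutsize_eq_ecut, hd, ecut_congr G rfl hc]
    rw [ecut_union_right _ _ (Finset.disjoint_union_right.mpr ⟨d12, d14⟩),
      ecut_union_right _ _ d24, ecut_comm G (Xᶜ ∩ S) (X ∩ S), ecut_comm G (Xᶜ ∩ S) (X ∩ Sᶜ)]
  rw [e1, e2, e3, e4, e5, e6]
  set a := ecut G (X ∩ S) (X ∩ Sᶜ)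
  set b := ecut G (X ∩ S) (Xᶜ ∩ S)
  set c := ecut G (X ∩ S) (Xᶜ ∩ Sᶜ)
  set d := ecut G (X ∩ Sᶜ) (Xᶜ ∩ S)
  set f := ecut G (X ∩ Sᶜ) (Xᶜ ∩ Sᶜ)
  set g := ecut G (Xᶜ ∩ S) (Xᶜ ∩ Sᶜ)
  have hh : ecut G (Xᶜ ∩ S) (X ∩ Sᶜ) = d := ecut_comm G _ _
  rw [hh]
  omega

section Contract
variable (G : Multigraph V) (A : Finset V)

lemma contract_some_some (a b : {x : V // x ∉ A}) :
    (G.contract A).mult s(some a, some b) = G.mult s(a.1, b.1) := rfl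

lemma contract_none_some (b : {x : V // x ∉ A}) :
    (G.contract A).mult s(none, some b) = ∑ y ∈ A, G.mult s(b.1, y) := rfl

lemma contract_some_none (a : {x : V // x ∉ A}) :
    (G.contract A).mult s(some a, none) = ∑ y ∈ A, G.mult s(a.1, y) := rfl

lemma sum_subtype_compl (f : V → ℕ) :
    ∑ b : {x : V // x ∉ A}, f b.1 = ∑ y ∈ Aᶜ, f y := by
  rw [← Finset.sum_subtype Aᶜ (fun x => Finset.mem_compl) f]

lemma image_val_compl (T0 : Finset {x : V // x ∉ A}) :
    (T0.image Subtype.val)ᶜ = A ∪ (T0ᶜ.image Subtype.val) := by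
  ext x
  simp only [Finset.mem_compl, Finset.mem_union, Finset.mem_image]
  constructor
  · intro h
    by_cases hx : x ∈ A
    · exact Or.inl hx
    · exact Or.inr ⟨⟨x, hx⟩, fun hmem => h ⟨⟨x, hx⟩, hmem, rfl⟩, rfl⟩
  · rintro (hx | ⟨a, ha, rfl⟩) ⟨b, hb, hba⟩
    · exact b.2 (hba ▸ hx)
    · exact ha (by rwa [Subtype.ext hba] at hb)

lemma card_image_val (T0 : Finset {x : V // x ∉ A}) :
    (T0.image Subtype.val).card = T0.card :=
  Finset.card_image_of_injective _ Subtype.val_injective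

lemma image_some_compl (T0 : Finset {x : V // x ∉ A}) :
    ((T0.image some)ᶜ : Finset (Option {x : V // x ∉ A}))
      = insert none (T0ᶜ.image some) := by
  ext (_ | a) <;> simp

lemma insert_none_image_some_compl (T0 : Finset {x : V // x ∉ A}) :
    ((insert none (T0.image some))ᶜ : Finset (Option {x : V // x ∉ A}))
      = T0ᶜ.image some := by
  ext (_ | a) <;> simp

lemma sum_image_val (T0 : Finset {x : V // x ∉ A}) (f : V → ℕ) :
    ∑ y ∈ T0.image Subtype.val, f y = ∑ b ∈ T0, f b.1 :=
  Finset.sum_image (fun x _ y _ h => Subtype.val_injective h)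

lemma sum_image_some (T0 : Finset {x : V // x ∉ A}) (f : Option {x : V // x ∉ A} → ℕ) :
    ∑ y ∈ T0.image some, f y = ∑ b ∈ T0, f (some b) :=
  Finset.sum_image (fun x _ y _ h => Option.some_injective _ h)

lemma val_compl_disjoint (T0 : Finset {x : V // x ∉ A}) :
    Disjoint A (T0.image Subtype.val) := by
  rw [Finset.disjoint_left]
  intro x hx hximg
  rcases Finset.mem_image.mp hximg with ⟨c, _, rfl⟩
  exact c.2 hx

lemma cut_contract_out (T0 : Finset {x : V // x ∉ A}) :
    (G.contract A).cutsize (T0.image some) = G.cutsize (T0.image Subtype.val) := by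
  rw [cutsize, cutsize, image_some_compl, image_val_compl]
  rw [sum_image_some]
  have hnot : (none : Option {x : V // x ∉ A}) ∉ T0ᶜ.image some := by simp
  calc ∑ b ∈ T0, ∑ y ∈ insert none (T0ᶜ.image some), (G.contract A).mult s(some b, y)
      = ∑ b ∈ T0, ((G.contract A).mult s(some b, none)
          + ∑ y ∈ T0ᶜ.image some, (G.contract A).mult s(some b, y)) := by
        refine Finset.sum_congr rfl fun b _ => Finset.sum_insert hnot
    _ = ∑ b ∈ T0, (∑ y ∈ A, G.mult s(b.1, y) + ∑ c ∈ T0ᶜ, G.mult s(b.1, c.1)) := by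
        refine Finset.sum_congr rfl fun b _ => ?_
        rw [contract_some_none, sum_image_some]
        rfl
    _ = ∑ x ∈ T0.image Subtype.val, ∑ y ∈ A ∪ T0ᶜ.image Subtype.val, G.mult s(x, y) := by
        rw [sum_image_val]
        refine Finset.sum_congr rfl fun b _ => ?_
        rw [Finset.sum_union (val_compl_disjoint A T0ᶜ), sum_image_val]

lemma cut_contract_in (T0 : Finset {x : V // x ∉ A}) :
    (G.contract A).cutsize (insert none (T0.image some))
      = G.cutsize (A ∪ T0.image Subtype.val) := by
  rw [cutsize, cutsize, insert_none_image_some_compl]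
  have hnot : (none : Option {x : V // x ∉ A}) ∉ T0.image some := by simp
  have hAc : (A ∪ T0.image Subtype.val)ᶜ = T0ᶜ.image Subtype.val := by
    ext x
    simp only [Finset.mem_compl, Finset.mem_union, Finset.mem_image, not_or]
    constructor
    · rintro ⟨hxA, hx2⟩
      exact ⟨⟨x, hxA⟩, fun hm => hx2 ⟨_, hm, rfl⟩, rfl⟩
    · rintro ⟨a, ha, rfl⟩
      refine ⟨a.2, ?_⟩
      rintro ⟨b, hb, hba⟩
      exact ha (by rwa [Subtype.ext hba] at hb)
  rw [hAc, Finset.sum_insert hnot, Finset.sum_union (val_compl_disjoint A T0)]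
  congr 1
  · rw [sum_image_some]
    calc ∑ c ∈ T0ᶜ, (G.contract A).mult s(none, some c)
        = ∑ c ∈ T0ᶜ, ∑ y ∈ A, G.mult s(c.1, y) := rfl
      _ = ∑ x ∈ A, ∑ y ∈ T0ᶜ.image Subtype.val, G.mult s(x, y) := by
          rw [Finset.sum_comm]
          refine Finset.sum_congr rfl fun x _ => ?_
          rw [sum_image_val]
          refine Finset.sum_congr rfl fun c _ => by rw [Sym2.eq_swap]
  · rw [sum_image_some, sum_image_val]
    refine Finset.sum_congr rfl fun b _ => ?_
    rw [sum_image_some, sum_image_val]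
    rfl

lemma card_subtype_notMem : Fintype.card {x : V // x ∉ A} = Aᶜ.card := by
  rw [Fintype.card_subtype]
  congr 1
  ext x
  simp

lemma contract_regular {r : ℕ} (hreg : G.IsRegular r) (hcutA : G.cutsize A = r) :
    (G.contract A).IsRegular r := by
  intro v
  rw [degree, Fintype.sum_option]
  rcases v with _ | a
  · rw [show (G.contract A).mult s(none, none) = 0 from rfl, zero_add]
    calc ∑ b : {x : V // x ∉ A}, (G.contract A).mult s(none, some b)
        = ∑ b : {x : V // x ∉ A}, ∑ y ∈ A, G.mult s(b.1, y) := rfl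
      _ = ∑ x ∈ Aᶜ, ∑ y ∈ A, G.mult s(x, y) :=
          sum_subtype_compl A (fun x => ∑ y ∈ A, G.mult s(x, y))
      _ = G.cutsize Aᶜ := by rw [cutsize, compl_compl]
      _ = r := by rw [cutsize_compl, hcutA]
  · calc (G.contract A).mult s(some a, none)
          + ∑ b : {x : V // x ∉ A}, (G.contract A).mult s(some a, some b)
        = ∑ y ∈ A, G.mult s(a.1, y) + ∑ b : {x : V // x ∉ A}, G.mult s(a.1, b.1) := rfl
      _ = ∑ y ∈ A, G.mult s(a.1, y) + ∑ y ∈ Aᶜ, G.mult s(a.1, y) := by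
          rw [sum_subtype_compl A (fun y => G.mult s(a.1, y))]
      _ = ∑ y, G.mult s(a.1, y) := Finset.sum_add_sum_compl A _
      _ = r := hreg a.1

lemma contract_rgraph {r : ℕ} (hG : G.IsRGraph r) (hcutA : G.cutsize A = r)
    (hA : Odd A.card ∨ Odd Aᶜ.card) : (G.contract A).IsRGraph r := by
  refine ⟨contract_regular G A hG.1 hcutA, ?_⟩
  intro T hT
  by_cases hn : none ∈ T
  · have hTrep : T = insert none ((Finset.eraseNone T).image some) := by
      rw [Finset.image_some_eraseNone, Finset.insert_erase hn]
    set T0 := Finset.eraseNone T with hT0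
    have hcard : T.card = T0.card + 1 := by
      rw [hTrep, Finset.card_insert_of_notMem (by simp),
        Finset.card_image_of_injective _ (Option.some_injective _)]
    have hT0even : T0.card % 2 = 0 := by
      have := Nat.odd_iff.mp hT; omega
    rcases hA with hA | hAc
    · have hodd : Odd (A ∪ T0.image Subtype.val).card := by
        rw [Finset.card_union_of_disjoint (val_compl_disjoint A T0), card_image_val]
        have := Nat.odd_iff.mp hA
        rw [Nat.odd_iff]; omega
      calc r ≤ G.cutsize (A ∪ T0.image Subtype.val) := hG.2 _ hodd
        _ = (G.contract A).cutsize T := by rw [← cut_contract_in]; rw [← hTrep]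
    · have hcompl : (Tᶜ : Finset (Option {x : V // x ∉ A})) = T0ᶜ.image some := by
        rw [hTrep, insert_none_image_some_compl]
      have hodd : Odd (T0ᶜ.image Subtype.val).card := by
        rw [card_image_val, Finset.card_compl, card_subtype_notMem]
        have h1 := Nat.odd_iff.mp hAc
        have h2 : T0.card ≤ Aᶜ.card := by
          rw [← card_subtype_notMem (A := A)]
          exact (Finset.card_le_univ T0).trans_eq (Finset.card_univ)
        rw [Nat.odd_iff]; omega
      calc r ≤ G.cutsize (T0ᶜ.image Subtype.val) := hG.2 _ hodd
        _ = (G.contract A).cutsize (T0ᶜ.image some) := (cut_contract_out G A T0ᶜ).symm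
        _ = (G.contract A).cutsize Tᶜ := by rw [hcompl]
        _ = (G.contract A).cutsize T := cutsize_compl _ _
  · have hTrep : T = (Finset.eraseNone T).image some := by
      rw [Finset.image_some_eraseNone, Finset.erase_eq_of_notMem hn]
    set T0 := Finset.eraseNone T with hT0
    have hodd : Odd (T0.image Subtype.val).card := by
      rw [card_image_val]
      rwa [hTrep, Finset.card_image_of_injective _ (Option.some_injective _)] at hT
    calc r ≤ G.cutsize (T0.image Subtype.val) := hG.2 _ hodd
      _ = (G.contract A).cutsize T := by rw [← cut_contract_out]; rw [← hTrep]

end Contract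

section Backward
variable (G : Multigraph V) (A : Finset V)

/-- Realize a subset of `Aᶜ` as the image of a finset of the subtype. -/
lemma exists_subtype_rep {C : Finset V} (hC : ∀ x ∈ C, x ∉ A) :
    ∃ T0 : Finset {x : V // x ∉ A}, T0.image Subtype.val = C := by
  refine ⟨(Finset.univ.filter (fun a : {x : V // x ∉ A} => a.1 ∈ C)), ?_⟩
  ext x
  simp only [Finset.mem_image, Finset.mem_filter, Finset.mem_univ, true_and]
  constructor
  · rintro ⟨a, ha, rfl⟩; exact ha
  · intro hx; exact ⟨⟨x, hC x hx⟩, hx, rfl⟩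

lemma cut_lower_out {r : ℕ} (hG : (G.contract A).IsRGraph r) {C : Finset V}
    (hC : ∀ x ∈ C, x ∉ A) (hodd : Odd C.card) : r ≤ G.cutsize C := by
  obtain ⟨T0, rfl⟩ := exists_subtype_rep A hC
  rw [← cut_contract_out]
  refine hG.2 _ ?_
  rwa [Finset.card_image_of_injective _ (Option.some_injective _), ← card_image_val A T0]

lemma cut_lower_in {r : ℕ} (hG : (G.contract A).IsRGraph r) {C : Finset V}
    (hC : ∀ x ∈ C, x ∉ A) (heven : C.card % 2 = 0) : r ≤ G.cutsize (A ∪ C) := by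
  obtain ⟨T0, rfl⟩ := exists_subtype_rep A hC
  rw [← cut_contract_in]
  refine hG.2 _ ?_
  rw [Finset.card_insert_of_notMem (by simp),
    Finset.card_image_of_injective _ (Option.some_injective _), Nat.odd_iff]
  rw [card_image_val A T0] at heven
  omega

end Backward


/-- **Rizzi's lemma.**  Let `G` be an `r`-regular multigraph and `S` a set of odd
cardinality with `|∂(S)| = r`.  Then `G` is an `r`-graph iff both graphs `G_S` and
`G_{S̄}`, obtained by contracting `S` resp. its complement to a single vertex and
deleting loops, are `r`-graphs. -/
theorem r_graph_iff_contractions {V : Type} [Fintype V] [DecidableEq V]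
    (r : ℕ) (G : Multigraph V) (hreg : G.IsRegular r)
    (S : Finset V) (hodd : Odd S.card) (hcut : G.cutsize S = r) :
    G.IsRGraph r ↔ (G.contract S).IsRGraph r ∧ (G.contract Sᶜ).IsRGraph r := by
  constructor
  · intro hG
    refine ⟨contract_rgraph G S hG hcut (Or.inl hodd), contract_rgraph G Sᶜ hG ?_ ?_⟩
    · rw [cutsize_compl, hcut]
    · right; rwa [compl_compl]
  · rintro ⟨hGS, hGSc⟩
    refine ⟨hreg, ?_⟩
    intro X hX
    have hXS : (X ∩ S).card + (X \ S).card = X.card := Finset.card_inter_add_card_sdiff X S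
    have hSX : (X ∩ S).card + (S \ X).card = S.card := by
      rw [Finset.inter_comm]; exact Finset.card_inter_add_card_sdiff S X
    have hU : (X ∪ S).card + (X ∩ S).card = X.card + S.card :=
      Finset.card_union_add_card_inter X S
    have hXodd := Nat.odd_iff.mp hX
    have hSodd := Nat.odd_iff.mp hodd
    by_cases hpar : (X ∩ S).card % 2 = 1
    · -- X ∩ S odd, X ∪ S odd
      have h1 : r ≤ G.cutsize (X ∩ S) := by
        refine cut_lower_out G Sᶜ hGSc (fun x hx => ?_) (Nat.odd_iff.mpr hpar)
        simp only [Finset.mem_compl, not_not]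
        exact (Finset.mem_inter.mp hx).2
      have h2 : r ≤ G.cutsize (X ∪ S) := by
        have hrw : X ∪ S = S ∪ (X \ S) := by
          ext a; simp only [Finset.mem_union, Finset.mem_sdiff]; tauto
        rw [hrw]
        exact cut_lower_in G S hGS (fun x hx => (Finset.mem_sdiff.mp hx).2) (by omega)
      have := (cut_submod G X S).1
      rw [hcut] at this
      omega
    · -- X \ S odd, S \ X odd
      have h1 : r ≤ G.cutsize (X \ S) :=
        cut_lower_out G S hGS (fun x hx => (Finset.mem_sdiff.mp hx).2)
          (Nat.odd_iff.mpr (by omega))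
      have h2 : r ≤ G.cutsize (S \ X) := by
        refine cut_lower_out G Sᶜ hGSc (fun x hx => ?_) (Nat.odd_iff.mpr (by omega))
        simp only [Finset.mem_compl, not_not]
        exact (Finset.mem_sdiff.mp hx).1
      have := (cut_submod G X S).2
      rw [hcut] at this
      omega
end

section
/- Let G be an r-graph with spanning tree T and let e = uv be an edge of G not in T. Let G' be obtained from G − e by adding two new vertices u', v' joined to each other by r−1 parallel edges, together with edges uu' and vv'. Then G' is an r-graph, and T together with the edges uu', vv' is a spanning tree of G'. -/
open Finset

open Multigraph

variable {V : Type} [Fintype V] [DecidableEq V]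

/-- The edge-expansion of `G` at an edge `uv`: delete one edge `uv`, add two new
vertices `u' = Sum.inr 0` and `v' = Sum.inr 1` joined to each other by `r - 1`
parallel edges, together with the edges `uu'` and `vv'`. -/
def Multigraph.expand (G : Multigraph V) (r : ℕ) (u v : V) :
    Multigraph (V ⊕ Fin 2) where
  mult := Sym2.lift ⟨fun a b =>
    match a, b with
    | Sum.inl a, Sum.inl b => G.mult s(a, b) - (if s(a, b) = s(u, v) then 1 else 0)
    | Sum.inl a, Sum.inr i => if (i = 0 ∧ a = u) ∨ (i = 1 ∧ a = v) then 1 else 0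
    | Sum.inr i, Sum.inl a => if (i = 0 ∧ a = u) ∨ (i = 1 ∧ a = v) then 1 else 0
    | Sum.inr i, Sum.inr j => if i = j then 0 else r - 1,
    by
      intro a b
      rcases a with a | i <;> rcases b with b | j <;> simp only []
      · rw [Sym2.eq_swap]
      · simp [eq_comm]⟩
  loopless w := by
    rcases w with a | i <;> simp [G.loopless]

/-- The extension of the spanning tree `T` by the two new edges `uu'` and `vv'`
of the edge-expansion. -/
def treeExpand (T : Sym2 V → ℕ) (u v : V) : Sym2 (V ⊕ Fin 2) → ℕ :=
  Sym2.lift ⟨fun a b =>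
    match a, b with
    | Sum.inl a, Sum.inl b => T s(a, b)
    | Sum.inl a, Sum.inr i => if (i = 0 ∧ a = u) ∨ (i = 1 ∧ a = v) then 1 else 0
    | Sum.inr i, Sum.inl a => if (i = 0 ∧ a = u) ∨ (i = 1 ∧ a = v) then 1 else 0
    | Sum.inr _, Sum.inr _ => 0,
    by
      intro a b
      rcases a with a | i <;> rcases b with b | j <;> simp only []
      rw [Sym2.eq_swap]⟩

/-!
Split the multiplicities of the expansion `G'` as those of `G`, minus one copy of `uv`, plus the
edges `uu'`, `vv'` and `r - 1` copies of `u'v'`. Degrees and cut sizes are additive in the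
multiplicities, which gives regularity at once. Let `S` be odd and `A` its trace on `V(G)`. If
`u'` and `v'` lie on the same side of `S`, then `A` is odd, so `|∂_G A| ≥ r`, and the lost edge
`uv`, if it crosses, is paid back by `uu'` or `vv'`. Otherwise `A` is even and the `r - 1` edges
`u'v'` cross; one of `uu'`, `vv'` crosses as well unless `uv` crosses `A`, and then `|∂_G A|` is
positive (`G` is connected) and even (`G` is regular and `|A|` is even), hence at least `2`.
The tree `T` gains two vertices and two edges, and reaches `u'`, `v'` through `u`, `v`.
-/


section EdgeWeights

variable {α : Type*}

def sumBetween (f : Sym2 α → ℕ) (A B : Finset α) : ℕ := ∑ a ∈ A, ∑ b ∈ B, f s(a, b)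

lemma sumBetween_add (f g : Sym2 α → ℕ) (A B : Finset α) :
    sumBetween (f + g) A B = sumBetween f A B + sumBetween g A B := by
  simp only [sumBetween, Pi.add_apply, Finset.sum_add_distrib]

lemma sumBetween_smul (c : ℕ) (f : Sym2 α → ℕ) (A B : Finset α) :
    sumBetween (c • f) A B = c * sumBetween f A B := by
  simp only [sumBetween, Pi.smul_apply, smul_eq_mul, Finset.mul_sum]

lemma even_sumBetween_self {f : Sym2 α → ℕ} (hf : ∀ a, f s(a, a) = 0) (A : Finset α) :
    Even (sumBetween f A A) := by
  rw [← ZMod.natCast_eq_zero_iff_even, sumBetween, ← Finset.sum_product']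
  push_cast
  refine Finset.sum_involution (fun p _ => p.swap) (fun p _ => ?_) (fun ⟨a, b⟩ _ hne h => ?_)
    (fun p hp => Finset.mem_product.2 (Finset.mem_product.1 hp).symm) (fun p _ => p.swap_swap)
  · rw [Prod.fst_swap, Prod.snd_swap, Sym2.eq_swap, CharTwo.add_self_eq_zero]
  · obtain rfl : b = a := congrArg Prod.fst h
    exact hne (by rw [hf, Nat.cast_zero])

variable [DecidableEq α]

lemma sumBetween_single {x y : α} (hxy : x ≠ y) (A B : Finset α) :
    sumBetween (Pi.single s(x, y) 1) A B =
      (if x ∈ A ∧ y ∈ B then 1 else 0) + (if y ∈ A ∧ x ∈ B then 1 else 0) := by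
  have hsplit : ∀ a b : α, (Pi.single s(x, y) 1 : Sym2 α → ℕ) s(a, b) =
      (if (a, b) = (x, y) then 1 else 0) + (if (a, b) = (y, x) then 1 else 0) := by
    intro a b
    simp only [Pi.single_apply, Sym2.eq_iff, Prod.mk.injEq]
    split_ifs <;> grind
  simp only [sumBetween, hsplit, Finset.sum_add_distrib, ← Finset.sum_product',
    Finset.sum_ite_eq', Finset.mem_product]

end EdgeWeights

section LiftLeft

variable {α β : Type*}

noncomputable def liftLeft (f : Sym2 α → ℕ) : Sym2 (α ⊕ β) → ℕ :=
  Function.extend (Sym2.map Sum.inl) f 0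

lemma liftLeft_map_inl (f : Sym2 α → ℕ) (q : Sym2 α) :
    liftLeft (β := β) f (q.map Sum.inl) = f q :=
  (Sym2.map.injective Sum.inl_injective).extend_apply _ _ _

lemma liftLeft_eq_zero (f : Sym2 α → ℕ) {p : Sym2 (α ⊕ β)} {b : β} (h : Sum.inr b ∈ p) :
    liftLeft f p = 0 := by
  refine Function.extend_apply' _ _ _ ?_
  rintro ⟨q, rfl⟩
  obtain ⟨a, -, ha⟩ := Sym2.mem_map.1 h
  exact Sum.inl_ne_inr ha

@[simp]
lemma liftLeft_inl_inl (f : Sym2 α → ℕ) (a b : α) :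
    liftLeft (β := β) f s(Sum.inl a, Sum.inl b) = f s(a, b) :=
  liftLeft_map_inl f s(a, b)

lemma sum_liftLeft [Fintype α] [Fintype β] [DecidableEq α] [DecidableEq β] (f : Sym2 α → ℕ) :
    ∑ p, liftLeft (β := β) f p = ∑ q, f q :=
  (Fintype.sum_of_injective _ (Sym2.map.injective Sum.inl_injective) f (liftLeft f)
    (fun _ hp => Function.extend_apply' f (0 : Sym2 (α ⊕ β) → ℕ) _ hp)
    (fun q => (liftLeft_map_inl f q).symm)).symm

lemma sumBetween_liftLeft (f : Sym2 α → ℕ) (A B : Finset (α ⊕ β)) :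
    sumBetween (liftLeft f) A B = sumBetween f A.toLeft B.toLeft := by
  simp only [sumBetween, Finset.sum_sum_eq_sum_toLeft_add_sum_toRight, ← Sym2.map_mk,
    liftLeft_map_inl, liftLeft_eq_zero f (Sym2.mem_mk_right _ _),
    liftLeft_eq_zero f (Sym2.mem_mk_left _ _), Finset.sum_const_zero, add_zero]

end LiftLeft

lemma Finset.toLeft_compl {α β : Type*} [Fintype α] [Fintype β] [DecidableEq α] [DecidableEq β]
    (S : Finset (α ⊕ β)) : Sᶜ.toLeft = S.toLeftᶜ := by
  ext; simp

@[simp]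
lemma Finset.toLeft_singleton_inl {α β : Type*} (a : α) :
    ({Sum.inl a} : Finset (α ⊕ β)).toLeft = {a} := by
  ext; simp

@[simp]
lemma Finset.toLeft_singleton_inr {α β : Type*} (b : β) :
    ({Sum.inr b} : Finset (α ⊕ β)).toLeft = ∅ := by
  ext; simp

namespace Multigraph

section

variable {W : Type} [DecidableEq W]

lemma expand_mult_add_single {G : Multigraph W} {r : ℕ} {u v : W} (hm : 0 < G.mult s(u, v)) :
    (G.expand r u v).mult + Pi.single s(Sum.inl u, Sum.inl v) 1 =
      liftLeft G.mult + Pi.single s(Sum.inl u, Sum.inr 0) 1 + Pi.single s(Sum.inl v, Sum.inr 1) 1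
        + (r - 1) • Pi.single s(Sum.inr 0, Sum.inr 1) 1 := by
  funext p
  induction p using Sym2.ind with | _ x y => ?_
  rcases x with a | i <;> rcases y with b | j
  · by_cases h : a = u ∧ b = v ∨ a = v ∧ b = u
    · have hab : 0 < G.mult s(a, b) := by
        obtain ⟨rfl, rfl⟩ | ⟨rfl, rfl⟩ := h
        exacts [hm, Sym2.eq_swap ▸ hm]
      simp [expand, Pi.single_apply, h, Nat.sub_add_cancel hab]
    · simp [expand, h]
  · fin_cases j <;> simp [expand, liftLeft_eq_zero _ (Sym2.mem_mk_right _ _), Pi.single_apply]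
  · fin_cases i <;> simp [expand, liftLeft_eq_zero _ (Sym2.mem_mk_left _ _), Pi.single_apply]
  · fin_cases i <;> fin_cases j <;>
      simp [expand, liftLeft_eq_zero _ (Sym2.mem_mk_left _ _), Pi.single_apply]

lemma treeExpand_eq (T : Sym2 W → ℕ) (u v : W) :
    treeExpand T u v =
      liftLeft T + Pi.single s(Sum.inl u, Sum.inr 0) 1 + Pi.single s(Sum.inl v, Sum.inr 1) 1 := by
  funext p
  induction p using Sym2.ind with | _ x y => ?_
  rcases x with a | i <;> rcases y with b | j
  · simp [treeExpand]
  · fin_cases j <;> simp [treeExpand, liftLeft_eq_zero _ (Sym2.mem_mk_right _ _), Pi.single_apply]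
  · fin_cases i <;> simp [treeExpand, liftLeft_eq_zero _ (Sym2.mem_mk_left _ _), Pi.single_apply]
  · simp [treeExpand, liftLeft_eq_zero _ (Sym2.mem_mk_left _ _)]

lemma treeExpand_le_expand {G : Multigraph W} {T : Sym2 W → ℕ} {r : ℕ} {u v : W}
    (hT : ∀ p, T p ≤ G.mult p) (he : T s(u, v) < G.mult s(u, v)) (p : Sym2 (W ⊕ Fin 2)) :
    treeExpand T u v p ≤ (G.expand r u v).mult p := by
  induction p using Sym2.ind with | _ x y => ?_
  rcases x with a | i <;> rcases y with b | j
  · show T s(a, b) ≤ G.mult s(a, b) - if s(a, b) = s(u, v) then 1 else 0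
    split_ifs with h
    · rw [h]; omega
    · exact hT _
  · exact le_rfl
  · exact le_rfl
  · exact Nat.zero_le _

lemma treeExpand_reflTransGen {T : Sym2 W → ℕ}
    (hT : ∀ a b, Relation.ReflTransGen (fun x y => T s(x, y) ≠ 0) a b) (u v : W)
    (w₁ w₂ : W ⊕ Fin 2) :
    Relation.ReflTransGen (fun x y => treeExpand T u v s(x, y) ≠ 0) w₁ w₂ := by
  set R := fun x y => treeExpand T u v s(x, y) ≠ 0
  have : Std.Symm R := ⟨fun x y h => by
    change treeExpand T u v s(y, x) ≠ 0
    rwa [Sym2.eq_swap]⟩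
  have hlift : ∀ a b, Relation.ReflTransGen R (Sum.inl a) (Sum.inl b) := fun a b =>
    Relation.ReflTransGen.lift Sum.inl (fun _ _ h => h) _ _ (hT a b)
  have hfrom : ∀ w, Relation.ReflTransGen R (Sum.inl u) w := by
    rintro (a | i)
    · exact hlift u a
    · fin_cases i
      · exact .single (by simp [R, treeExpand])
      · exact (hlift u v).tail (by simp [R, treeExpand])
  exact (Std.Symm.symm _ _ (hfrom w₁)).trans (hfrom w₂)

end

section

variable {W : Type} [Fintype W]

def Preconnected (G : Multigraph W) : Prop :=
  ∀ a b : W, Relation.ReflTransGen (fun x y => G.mult s(x, y) ≠ 0) a b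

lemma IsSpanningTree.preconnected {G : Multigraph W} {T : Sym2 W → ℕ} (hT : G.IsSpanningTree T) :
    G.Preconnected := fun a b =>
  Relation.ReflTransGen.mono (fun _ _ hxy => ((Nat.pos_of_ne_zero hxy).trans_le (hT.1 _)).ne')
    _ _ (hT.2.2 a b)

lemma degree_eq_sumBetween (G : Multigraph W) (w : W) :
    G.degree w = sumBetween G.mult {w} univ := by
  rw [sumBetween, sum_singleton, degree]

variable [DecidableEq W]

lemma cutsize_eq_sumBetween (G : Multigraph W) (S : Finset W) :
    G.cutsize S = sumBetween G.mult S Sᶜ := rfl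

lemma sum_degree_eq (G : Multigraph W) (A : Finset W) :
    ∑ x ∈ A, G.degree x = sumBetween G.mult A A + G.cutsize A := by
  simp only [degree, sumBetween, cutsize, ← sum_add_distrib, sum_add_sum_compl]

lemma even_cutsize {G : Multigraph W} {r : ℕ} (hG : G.IsRegular r) {A : Finset W}
    (hA : Even #A) : Even (G.cutsize A) := by
  have h := sum_degree_eq G A
  rw [sum_congr rfl fun x _ => hG x, sum_const, smul_eq_mul] at h
  exact (Nat.even_add.1 (h ▸ hA.mul_right r)).1 (even_sumBetween_self G.loopless A)

lemma cutsize_pos {G : Multigraph W} (hG : G.Preconnected) {A : Finset W} {x y : W}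
    (hx : x ∈ A) (hy : y ∉ A) : 0 < G.cutsize A := by
  by_contra! h
  have hzero : ∀ a ∈ A, ∀ b ∉ A, G.mult s(a, b) = 0 := fun a ha b hb =>
    sum_eq_zero_iff.1 (sum_eq_zero_iff.1 (Nat.le_zero.1 h) a ha) b (mem_compl.2 hb)
  have hclosed : ∀ z, Relation.ReflTransGen (fun x y => G.mult s(x, y) ≠ 0) x z → z ∈ A := by
    intro z hz
    induction hz with
    | refl => exact hx
    | tail _ hbc ih => exact not_not.1 fun hc => hbc (hzero _ ih _ hc)
  exact hy (hclosed y (hG x y))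

lemma two_le_cutsize {G : Multigraph W} {r : ℕ} (hG : G.IsRegular r) (hconn : G.Preconnected)
    {A : Finset W} (hA : Even #A) {x y : W} (hx : x ∈ A) (hy : y ∉ A) : 2 ≤ G.cutsize A := by
  obtain ⟨k, hk⟩ := even_cutsize hG hA
  have := cutsize_pos hconn hx hy
  omega

lemma expand_isRegular {G : Multigraph W} {r : ℕ} {u v : W} (hG : G.IsRegular r) (huv : u ≠ v)
    (hm : 0 < G.mult s(u, v)) : (G.expand r u v).IsRegular r := by
  -- the vertices `u'`, `v'` have degree `1 + (r - 1)`, which is `r` only for `r ≠ 0`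
  have hr : 0 < r := by
    rw [← hG u]
    exact hm.trans_le (single_le_sum (f := fun w => G.mult s(u, w)) (by simp) (mem_univ v))
  intro w
  have key := congrArg (sumBetween · {w} univ) (expand_mult_add_single (r := r) hm)
  simp only [sumBetween_add, sumBetween_smul, sumBetween_liftLeft,
    sumBetween_single (Sum.inl_injective.ne huv), sumBetween_single Sum.inl_ne_inr,
    sumBetween_single (Sum.inr_injective.ne Fin.zero_ne_one), ← degree_eq_sumBetween] at key
  rcases w with a | i
  · simp only [mem_singleton, Sum.inl.injEq, mem_univ, and_true, toLeft_singleton_inl, toLeft_univ,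
      ← degree_eq_sumBetween, hG a, reduceCtorEq, ↓reduceIte, add_zero, mul_zero] at key
    omega
  · fin_cases i <;> simp [sumBetween] at key ⊢ <;> omega

lemma le_cutsize_expand {G : Multigraph W} {r : ℕ} {u v : W} (hG : G.IsRGraph r)
    (hconn : G.Preconnected) (huv : u ≠ v) (hm : 0 < G.mult s(u, v))
    {S : Finset (W ⊕ Fin 2)} (hS : Odd #S) : r ≤ (G.expand r u v).cutsize S := by
  have hcard :
      #S = #S.toLeft + ((if Sum.inr 0 ∈ S then 1 else 0) + if Sum.inr 1 ∈ S then 1 else 0) := by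
    rw [← card_toLeft_add_card_toRight, card_eq_sum_ones S.toRight, ← Fintype.sum_ite_mem,
      Fin.sum_univ_two]
    simp only [mem_toRight]
  -- `key`: the cut of `S` plus the crossing of `uv` is the cut of `A` plus the crossings of
  -- `uu'`, `vv'` and `r - 1` times that of `u'v'`.
  have key := congrArg (sumBetween · S Sᶜ) (expand_mult_add_single (r := r) hm)
  simp only [sumBetween_add, sumBetween_smul, sumBetween_liftLeft,
    sumBetween_single (Sum.inl_injective.ne huv), sumBetween_single Sum.inl_ne_inr,
    sumBetween_single (Sum.inr_injective.ne Fin.zero_ne_one), toLeft_compl, mem_compl] at key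
  rw [← cutsize_eq_sumBetween, ← cutsize_eq_sumBetween] at key
  set A := S.toLeft
  have hodd : #A % 2 = 1 → r ≤ G.cutsize A := fun h => hG.2 _ (Nat.odd_iff.2 h)
  have hsplit : (Sum.inl u ∈ S ∧ Sum.inl v ∉ S ∨ Sum.inl v ∈ S ∧ Sum.inl u ∉ S) →
      #A % 2 = 0 → 2 ≤ G.cutsize A := by
    rintro (⟨hu, hv⟩ | ⟨hv, hu⟩) h
    exacts [two_le_cutsize hG.1 hconn (Nat.even_iff.2 h) (mem_toLeft.2 hu) (mt mem_toLeft.1 hv),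
      two_le_cutsize hG.1 hconn (Nat.even_iff.2 h) (mem_toLeft.2 hv) (mt mem_toLeft.1 hu)]
  rw [Nat.odd_iff] at hS
  by_cases hu : Sum.inl u ∈ S <;> by_cases hv : Sum.inl v ∈ S <;> by_cases h0 : Sum.inr 0 ∈ S <;>
    by_cases h1 : Sum.inr 1 ∈ S <;> simp [hu, hv, h0, h1] at key hcard hsplit <;> omega

lemma IsSpanningTree.treeExpand {G : Multigraph W} {T : Sym2 W → ℕ} {r : ℕ} {u v : W}
    (hT : G.IsSpanningTree T) (he : T s(u, v) < G.mult s(u, v)) :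
    (G.expand r u v).IsSpanningTree (treeExpand T u v) := by
  refine ⟨treeExpand_le_expand hT.1 he, ?_, treeExpand_reflTransGen hT.2.2 u v⟩
  rw [treeExpand_eq, Fintype.card_sum, Fintype.card_fin, ← hT.2.1]
  simp only [Pi.add_apply, sum_add_distrib, sum_liftLeft, Fintype.sum_pi_single']

end

end Multigraph

theorem edge_expansion_is_r_graph_general {V : Type} [Fintype V] [DecidableEq V]
    (r : ℕ) (G : Multigraph V) (hG : G.IsRGraph r)
    (T : Sym2 V → ℕ) (hT : G.IsSpanningTree T)
    (u v : V) (he : T s(u, v) < G.mult s(u, v)) :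
    (G.expand r u v).IsRGraph r ∧
      (G.expand r u v).IsSpanningTree (treeExpand T u v) := by
  have hm : 0 < G.mult s(u, v) := (Nat.zero_le _).trans_lt he
  have huv : u ≠ v := by
    rintro rfl
    exact hm.ne' (G.loopless u)
  exact ⟨⟨expand_isRegular hG.1 huv hm, fun S hS => le_cutsize_expand hG hT.preconnected huv hm hS⟩,
    hT.treeExpand he⟩

/-- **Edge-expansion.**  Let `G` be an `r`-graph (`r ≥ 3`) with spanning tree `T`
and let `uv` be an edge of `G` not in `T`.  Then the edge-expansion `G'` of `G` at
`uv` is again an `r`-graph, and `T` together with the edges `uu'`, `vv'` is a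
spanning tree of `G'`. -/
theorem edge_expansion_is_r_graph {V : Type} [Fintype V] [DecidableEq V]
    (r : ℕ) (hr : 3 ≤ r) (G : Multigraph V) (hG : G.IsRGraph r)
    (T : Sym2 V → ℕ) (hT : G.IsSpanningTree T)
    (u v : V) (he : T s(u, v) < G.mult s(u, v)) :
    (G.expand r u v).IsRGraph r ∧
      (G.expand r u v).IsSpanningTree (treeExpand T u v) :=
  edge_expansion_is_r_graph_general r G hG T hT u v he
end

section
/- Let G and G' be r-graphs such that G is obtained from G' by a 2-cut reduction. If G' has a collection of 2r perfect matchings such that every edge of G' lies in exactly two of them, then G has a collection of 2r perfect matchings such that every edge of G lies in exactly two of them. -/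
open Finset

open Multigraph
/-- Key parity lemma: in a perfect matching, the number of matching edges
from `u` into `S` equals the number from `v` into `S`. -/
theorem matching_balance {V : Type} [Fintype V] [DecidableEq V]
    (H : Multigraph V)
    (S : Finset V) (hSeven : Even S.card)
    (u v : V) (hu : u ∉ S) (hv : v ∉ S) (huv : u ≠ v)
    (hu1 : (∑ y ∈ S, H.mult s(u, y)) = 1) (hv1 : (∑ y ∈ S, H.mult s(v, y)) = 1)
    (hother : ∀ x : V, x ∉ S → x ≠ u → x ≠ v → ∀ y ∈ S, H.mult s(x, y) = 0)
    (N : Sym2 V → ℕ) (hN : H.IsPerfectMatching N) :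
    (∑ y ∈ S, N s(u, y)) = ∑ y ∈ S, N s(v, y) := by
  classical
  have hcu1 : (∑ y ∈ S, N s(u, y)) ≤ 1 :=
    le_trans (Finset.sum_le_sum fun y _ => hN.1 _) (le_of_eq hu1)
  have hcv1 : (∑ y ∈ S, N s(v, y)) ≤ 1 :=
    le_trans (Finset.sum_le_sum fun y _ => hN.1 _) (le_of_eq hv1)
  -- total degree of S in N
  have hcard : ∑ x ∈ S, ∑ y ∈ S, N s(x, y) + ∑ x ∈ S, ∑ y ∈ Sᶜ, N s(x, y) = S.card := by
    rw [← Finset.sum_add_distrib]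
    have h1 : ∀ x ∈ S, (∑ y ∈ S, N s(x, y)) + ∑ y ∈ Sᶜ, N s(x, y) = 1 := by
      intro x _
      rw [Finset.sum_add_sum_compl S (fun y => N s(x, y))]
      exact hN.2 x
    rw [Finset.sum_congr rfl h1, Finset.sum_const, smul_eq_mul, mul_one]
  -- the inner double sum is even
  have hinner : ((∑ x ∈ S, ∑ y ∈ S, N s(x, y) : ℕ) : ZMod 2) = 0 := by
    push_cast
    rw [← Finset.sum_product']
    refine Finset.sum_involution (fun p _ => (p.2, p.1)) ?_ ?_ ?_ ?_
    · intro p hp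
      have hsw : s(p.2, p.1) = s(p.1, p.2) := Sym2.eq_swap
      simp only [hsw]
      rw [← two_mul]
      have h2 : (2 : ZMod 2) = 0 := by decide
      rw [h2, zero_mul]
    · intro p hp hne heq
      have h21 : p.2 = p.1 := congrArg Prod.fst heq
      rw [h21] at hne
      have hz : N s(p.1, p.1) = 0 :=
        Nat.le_zero.mp ((H.loopless p.1) ▸ hN.1 s(p.1, p.1))
      exact hne (by rw [hz]; exact Nat.cast_zero)
    · intro p hp
      simp only [Finset.mem_product] at hp ⊢
      exact ⟨hp.2, hp.1⟩
    · intro p hp; rfl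
  -- the cut of N across S is cu + cv
  have hcut : ∑ x ∈ S, ∑ y ∈ Sᶜ, N s(x, y) =
      (∑ y ∈ S, N s(u, y)) + ∑ y ∈ S, N s(v, y) := by
    rw [Finset.sum_comm]
    have hsub : ({u, v} : Finset V) ⊆ Sᶜ := by
      intro x hx
      rcases Finset.mem_insert.mp hx with rfl | hx
      · exact Finset.mem_compl.mpr hu
      · rw [Finset.mem_singleton.mp hx]; exact Finset.mem_compl.mpr hv
    rw [← Finset.sum_subset hsub]
    · rw [Finset.sum_pair huv]
      congr 1 <;> exact Finset.sum_congr rfl fun y _ => by rw [Sym2.eq_swap]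
    · intro x hx hxuv
      have hxS : x ∉ S := Finset.mem_compl.mp hx
      have hxu : x ≠ u := fun h => hxuv (by simp [h])
      have hxv : x ≠ v := fun h => hxuv (by simp [h])
      refine Finset.sum_eq_zero fun y hy => ?_
      have hm := hother x hxS hxu hxv y hy
      have hle := hN.1 s(x, y)
      rw [hm] at hle
      have hsw : s(y, x) = s(x, y) := Sym2.eq_swap
      rw [hsw]; omega
  -- conclude: cu + cv is even
  have heven : 2 ∣ (∑ y ∈ S, N s(u, y)) + ∑ y ∈ S, N s(v, y) := by
    rw [← ZMod.natCast_eq_zero_iff, ← hcut]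
    have h0 : ((S.card : ℕ) : ZMod 2) = 0 := by
      rw [ZMod.natCast_eq_zero_iff]
      exact hSeven.two_dvd
    have hc := congrArg (fun n : ℕ => (n : ZMod 2)) hcard
    simp only [Nat.cast_add] at hc
    rw [hinner, zero_add] at hc
    rw [hc]; exact h0
  omega

/-- If `G` is obtained from the `r`-graph `H` by a 2-cut reduction and `H` has a
collection of `2r` perfect matchings covering every edge exactly twice, then so
does `G`. -/
theorem double_cover_of_reduction {V : Type} [Fintype V] [DecidableEq V]
    (r : ℕ) (H : Multigraph V) (hH : H.IsRGraph r)
    (S : Finset V) (hSeven : Even S.card) (hcut : H.cutsize S = 2)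
    (u v : V) (huv : u ≠ v) (hu : u ∉ S) (hv : v ∉ S)
    (hu1 : (∑ y ∈ S, H.mult s(u, y)) = 1) (hv1 : (∑ y ∈ S, H.mult s(v, y)) = 1)
    (hother : ∀ x : V, x ∉ S → x ≠ u → x ≠ v → ∀ y ∈ S, H.mult s(x, y) = 0)
    (hG' : (H.reduce S huv).IsRGraph r)
    (M : Fin (2 * r) → Sym2 V → ℕ)
    (hpm : ∀ i, H.IsPerfectMatching (M i))
    (hcover : ∀ p : Sym2 V, (∑ i, M i p) = 2 * H.mult p) :
    ∃ M' : Fin (2 * r) → Sym2 {x : V // x ∉ S} → ℕ,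
      (∀ i, (H.reduce S huv).IsPerfectMatching (M' i)) ∧
        ∀ p : Sym2 {x : V // x ∉ S}, (∑ i, M' i p) = 2 * (H.reduce S huv).mult p := by
  classical
  set c : Fin (2 * r) → ℕ := fun i => ∑ y ∈ S, M i s(u, y) with hc
  have hc1 : ∀ i, c i ≤ 1 := fun i =>
    le_trans (Finset.sum_le_sum fun y _ => (hpm i).1 _) (le_of_eq hu1)
  have hcv : ∀ i, c i = ∑ y ∈ S, M i s(v, y) := fun i =>
    matching_balance H S hSeven u v hu hv huv hu1 hv1 hother (M i) (hpm i)
  refine ⟨fun i p => M i (p.map Subtype.val) +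
      (if p.map Subtype.val = s(u, v) then c i else 0), fun i => ⟨?_, ?_⟩, ?_⟩
  · -- M' i ≤ reduce.mult
    intro p
    refine Nat.add_le_add ((hpm i).1 _) ?_
    by_cases h : p.map Subtype.val = s(u, v) <;> simp [reduce, h, hc1 i]
  · -- perfect matching degree condition
    intro a
    have hsplit : (∑ w : {x : V // x ∉ S}, M i s(a.val, w.val)) +
        (∑ y ∈ S, M i s(a.val, y)) = 1 := by
      rw [← Finset.sum_subtype (s := Sᶜ) (fun x => Finset.mem_compl)
        (fun x => M i s(a.val, x))]
      rw [add_comm, Finset.sum_add_sum_compl S (fun y => M i s(a.val, y))]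
      exact (hpm i).2 a.val
    have hmap : ∀ w : {x : V // x ∉ S},
        (s(a, w)).map Subtype.val = s(a.val, w.val) := fun w => Sym2.map_pair_eq _ _ _
    simp only [hmap]
    rw [Finset.sum_add_distrib]
    by_cases hau : a.val = u
    · have hterm : ∀ w : {x : V // x ∉ S},
          (if s(a.val, w.val) = s(u, v) then c i else 0)
            = (if w = (⟨v, hv⟩ : {x : V // x ∉ S}) then c i else 0) := by
        intro w
        have hiff : (s(a.val, w.val) = s(u, v)) ↔ (w = (⟨v, hv⟩ : {x : V // x ∉ S})) := by
          rw [hau, Sym2.eq_iff, Subtype.ext_iff]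
          constructor
          · rintro (⟨-, rfl⟩ | ⟨h1, -⟩)
            · rfl
            · exact absurd h1 huv
          · rintro rfl; exact Or.inl ⟨rfl, rfl⟩
        simp only [hiff]
      simp only [hterm]
      rw [Finset.sum_ite_eq' Finset.univ (⟨v, hv⟩ : {x : V // x ∉ S}) (fun _ => c i)]
      simp only [Finset.mem_univ, if_true]
      have : ∑ y ∈ S, M i s(a.val, y) = c i := by rw [hau, hc]
      omega
    · by_cases hav : a.val = v
      · have hterm : ∀ w : {x : V // x ∉ S},
            (if s(a.val, w.val) = s(u, v) then c i else 0)
              = (if w = (⟨u, hu⟩ : {x : V // x ∉ S}) then c i else 0) := by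
          intro w
          have hiff : (s(a.val, w.val) = s(u, v)) ↔ (w = (⟨u, hu⟩ : {x : V // x ∉ S})) := by
            rw [hav, Sym2.eq_iff, Subtype.ext_iff]
            constructor
            · rintro (⟨h1, -⟩ | ⟨-, rfl⟩)
              · exact absurd h1.symm huv
              · rfl
            · rintro rfl; exact Or.inr ⟨rfl, rfl⟩
          simp only [hiff]
        simp only [hterm]
        rw [Finset.sum_ite_eq' Finset.univ (⟨u, hu⟩ : {x : V // x ∉ S}) (fun _ => c i)]
        simp only [Finset.mem_univ, if_true]
        have : ∑ y ∈ S, M i s(a.val, y) = c i := by rw [hav, ← hcv i]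
        omega
      · have hterm : ∀ w : {x : V // x ∉ S},
            (if s(a.val, w.val) = s(u, v) then c i else 0) = 0 := by
          intro w
          rw [if_neg]
          intro h
          rcases Sym2.eq_iff.mp h with ⟨h1, -⟩ | ⟨h2, -⟩
          · exact hau h1
          · exact hav h2
        simp only [hterm, Finset.sum_const_zero, add_zero]
        have hzero : ∑ y ∈ S, M i s(a.val, y) = 0 :=
          Finset.sum_eq_zero fun y hy =>
            Nat.le_zero.mp ((hother a.val a.prop hau hav y hy) ▸ (hpm i).1 s(a.val, y))
        omega
  · -- coverage
    intro p
    rw [Finset.sum_add_distrib, hcover]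
    have hsum_c : ∑ i, c i = 2 := by
      rw [hc]
      rw [Finset.sum_comm]
      have : ∀ y ∈ S, ∑ i, M i s(u, y) = 2 * H.mult s(u, y) := fun y _ => hcover _
      rw [Finset.sum_congr rfl this, ← Finset.mul_sum, hu1]
      norm_num
    by_cases h : p.map Subtype.val = s(u, v) <;>
      simp [reduce, h, hsum_c, Finset.sum_const_zero, mul_add]
end

section
/- Let r be odd and 2 ≤ k ≤ r−1. If G is obtained from an r-graph G' by a 2-cut reduction and G' has r perfect matchings such that each edge of G' lies in at most k of them, then G has r perfect matchings such that each edge of G lies in at most k of them. -/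
open Finset

open Multigraph

lemma even_sym_double_sum {V : Type} [DecidableEq V] (S : Finset V) (f : V → V → ℕ)
    (hsymm : ∀ x y, f x y = f y x) (hdiag : ∀ x, f x x = 0) :
    Even (∑ x ∈ S, ∑ y ∈ S, f x y) := by
  classical
  induction S using Finset.induction with
  | empty => simp
  | @insert a S' ha ih =>
    rw [Finset.sum_insert ha]
    simp only [Finset.sum_insert ha, hdiag, zero_add]
    have : ∑ x ∈ S', (f x a + ∑ y ∈ S', f x y)
        = (∑ x ∈ S', f a x) + ∑ x ∈ S', ∑ y ∈ S', f x y := by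
      rw [Finset.sum_add_distrib]
      congr 1
      exact Finset.sum_congr rfl fun x _ => hsymm x a
    rw [this, ← add_assoc]
    exact Even.add (Even.add_self _) ih

/-- Let `r` be odd and `2 ≤ k ≤ r - 1`.  If `G` is obtained from the `r`-graph `H`
by a 2-cut reduction and `H` has `r` perfect matchings such that each edge lies in
at most `k` of them, then so does `G`. -/
theorem at_most_k_cover_of_reduction {V : Type} [Fintype V] [DecidableEq V]
    (r : ℕ) (H : Multigraph V) (hH : H.IsRGraph r)
    (S : Finset V) (hSeven : Even S.card) (hcut : H.cutsize S = 2)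
    (u v : V) (huv : u ≠ v) (hu : u ∉ S) (hv : v ∉ S)
    (hu1 : (∑ y ∈ S, H.mult s(u, y)) = 1) (hv1 : (∑ y ∈ S, H.mult s(v, y)) = 1)
    (hother : ∀ x : V, x ∉ S → x ≠ u → x ≠ v → ∀ y ∈ S, H.mult s(x, y) = 0)
    (hG' : (H.reduce S huv).IsRGraph r)
    (hodd : Odd r) (k : ℕ) (hk2 : 2 ≤ k) (hkr : k ≤ r - 1)
    (M : Fin r → Sym2 V → ℕ)
    (hpm : ∀ i, H.IsPerfectMatching (M i))
    (hcover : ∀ p : Sym2 V, (∑ i, M i p) ≤ k * H.mult p) :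
    ∃ M' : Fin r → Sym2 {x : V // x ∉ S} → ℕ,
      (∀ i, (H.reduce S huv).IsPerfectMatching (M' i)) ∧
        ∀ p : Sym2 {x : V // x ∉ S}, (∑ i, M' i p) ≤ k * (H.reduce S huv).mult p := by
  classical
  set c : Fin r → ℕ := fun i => ∑ y ∈ S, M i s(u, y) with hc
  have hMle : ∀ i p, M i p ≤ H.mult p := fun i => (hpm i).1
  have hMdeg : ∀ i x, ∑ y, M i s(x, y) = 1 := fun i => (hpm i).2
  have hMloop : ∀ i x, M i s(x, x) = 0 := fun i x =>
    Nat.le_antisymm (by rw [← H.loopless x]; exact hMle i _) (Nat.zero_le _)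
  have hc_le : ∀ i, c i ≤ 1 := fun i => by
    calc c i ≤ ∑ y ∈ S, H.mult s(u, y) := Finset.sum_le_sum fun y _ => hMle i _
    _ = 1 := hu1
  have hcv_le : ∀ i, (∑ y ∈ S, M i s(v, y)) ≤ 1 := fun i => by
    calc (∑ y ∈ S, M i s(v, y)) ≤ ∑ y ∈ S, H.mult s(v, y) :=
      Finset.sum_le_sum fun y _ => hMle i _
    _ = 1 := hv1
  -- for nonadjacent outside vertices the matchings vanish on edges into S
  have hMother : ∀ i, ∀ x : V, x ∉ S → x ≠ u → x ≠ v → ∀ y ∈ S, M i s(x, y) = 0 := by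
    intro i x hx hxu hxv y hy
    exact Nat.le_antisymm (by rw [← hother x hx hxu hxv y hy]; exact hMle i _) (Nat.zero_le _)
  -- each matching uses both cut edges or neither
  have hcv : ∀ i, (∑ y ∈ S, M i s(v, y)) = c i := by
    intro i
    have hI : Even (∑ x ∈ S, ∑ y ∈ S, M i s(x, y)) :=
      even_sym_double_sum S (fun x y => M i s(x, y))
        (fun x y => show M i s(x, y) = M i s(y, x) by rw [Sym2.eq_swap]) (hMloop i)
    have hrow : ∀ x ∈ S, (∑ y ∈ Sᶜ, M i s(x, y)) = M i s(x, u) + M i s(x, v) := by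
      intro x hx
      have hsub : ({u, v} : Finset V) ⊆ Sᶜ := by
        intro z hz
        rcases Finset.mem_insert.mp hz with rfl | hz
        · exact Finset.mem_compl.mpr hu
        · rw [Finset.mem_singleton.mp hz]; exact Finset.mem_compl.mpr hv
      have := Finset.sum_subset hsub (f := fun y => M i s(x, y))
        (fun y hy hny => by
          have hyu : y ≠ u := fun h => hny (by simp [h])
          have hyv : y ≠ v := fun h => hny (by simp [h])
          show M i s(x, y) = 0
          rw [Sym2.eq_swap]
          exact hMother i y (Finset.mem_compl.mp hy) hyu hyv x hx)
      rw [← this, Finset.sum_pair huv]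
    have hcut_eq : (∑ x ∈ S, ∑ y ∈ Sᶜ, M i s(x, y)) = c i + ∑ y ∈ S, M i s(v, y) := by
      rw [Finset.sum_congr rfl hrow, Finset.sum_add_distrib]
      congr 1
      · exact Finset.sum_congr rfl fun x _ => by rw [Sym2.eq_swap]
      · exact Finset.sum_congr rfl fun x _ => by rw [Sym2.eq_swap]
    have hcard : (∑ x ∈ S, ∑ y ∈ S, M i s(x, y)) + (∑ x ∈ S, ∑ y ∈ Sᶜ, M i s(x, y))
        = S.card := by
      rw [← Finset.sum_add_distrib]
      rw [Finset.sum_congr rfl (fun x _ => Finset.sum_add_sum_compl S fun y => M i s(x, y))]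
      rw [Finset.sum_congr rfl fun x _ => hMdeg i x]
      simp
    have hevencut : Even (c i + ∑ y ∈ S, M i s(v, y)) := by
      rw [← hcut_eq]
      rcases hSeven with ⟨m, hm⟩
      rcases hI with ⟨n, hn⟩
      exact ⟨m - n, by omega⟩
    rcases hevencut with ⟨t, ht⟩
    have h1 := hc_le i
    have h2 := hcv_le i
    omega
  -- the reduced matchings
  refine ⟨fun i p => M i (p.map Subtype.val)
      + (if p.map Subtype.val = s(u, v) then c i else 0), ?_, ?_⟩
  · intro i
    constructor
    · intro p
      show _ ≤ H.mult (p.map Subtype.val) + _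
      refine Nat.add_le_add (hMle i _) ?_
      split
      · exact hc_le i
      · exact le_refl 0
    · intro a
      simp only [Sym2.map_pair_eq]
      rw [Finset.sum_add_distrib]
      have hsplit : (∑ y ∈ S, M i s(a.val, y))
          + (∑ b : {x : V // x ∉ S}, M i s(a.val, b.val)) = 1 := by
        rw [← Finset.sum_subtype Sᶜ (fun x => Finset.mem_compl) (fun y => M i s(a.val, y))]
        rw [Finset.sum_add_sum_compl S (fun y => M i s(a.val, y))]
        exact hMdeg i a.val
      have hite : (∑ b : {x : V // x ∉ S},
          if s(a.val, b.val) = s(u, v) then c i else 0) = ∑ y ∈ S, M i s(a.val, y) := by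
        rcases eq_or_ne a.val u with hau | hau
        · rw [hau, hc]
          rw [Finset.sum_eq_single (⟨v, hv⟩ : {x : V // x ∉ S})]
          · simp
          · intro b _ hb
            rw [if_neg]
            intro h
            exact hb (Subtype.ext (Sym2.congr_right.mp h))
          · simp
        rcases eq_or_ne a.val v with hav | hav
        · rw [hav, hcv i, hc]
          rw [Finset.sum_eq_single (⟨u, hu⟩ : {x : V // x ∉ S})]
          · simp [Sym2.eq_swap]
          · intro b _ hb
            rw [if_neg]
            intro h
            rw [show s(u, v) = s(v, u) from Sym2.eq_swap] at h
            exact hb (Subtype.ext (Sym2.congr_right.mp h))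
          · simp
        · rw [Finset.sum_eq_zero, Finset.sum_eq_zero]
          · intro y hy
            exact hMother i a.val a.prop hau hav y hy
          · intro b _
            rw [if_neg]
            intro h
            rcases Sym2.eq_iff.mp h with ⟨h1, _⟩ | ⟨h2, _⟩
            · exact hau h1
            · exact hav h2
      rw [hite, Nat.add_comm, hsplit]
  · intro p
    rw [Finset.sum_add_distrib]
    show _ ≤ k * (H.mult (p.map Subtype.val) + _)
    have h1 : (∑ i, M i (p.map Subtype.val)) ≤ k * H.mult (p.map Subtype.val) := hcover _
    have h2 : (∑ i : Fin r, if p.map Subtype.val = s(u, v) then c i else 0)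
        ≤ k * (if p.map Subtype.val = s(u, v) then 1 else 0) := by
      split
      · simp only [mul_one]
        calc (∑ i, c i) = ∑ y ∈ S, ∑ i, M i s(u, y) := Finset.sum_comm
        _ ≤ ∑ y ∈ S, k * H.mult s(u, y) := Finset.sum_le_sum fun y _ => hcover _
        _ = k * ∑ y ∈ S, H.mult s(u, y) := (Finset.mul_sum _ _ _).symm
        _ = k := by rw [hu1, mul_one]
      · simp
    calc _ ≤ k * H.mult (p.map Subtype.val)
        + k * (if p.map Subtype.val = s(u, v) then 1 else 0) := Nat.add_le_add h1 h2
    _ = _ := (Nat.mul_add _ _ _).symm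
end
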